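/- arXiv:1403.1224 — 5 statements merged into one kernel-verified Lean document; each statement's English description precedes it below -/
import Mathlib

section
/- The family {ψ^{A,B}_{(n,m)} : n,m ∈ ℤ} is a tight frame for L²(ℝ) with frame constant 2Lχ; that is, for every f ∈ L²(ℝ) one has ∑_{n∈ℤ} ∑_{m∈ℤ} |⟨ψ^{A,B}_{(n,m)}, f⟩|² = 2·L·χ·‖f‖²_{L²(ℝ)}. -/
open MeasureTheory Complex Set Filter

open scoped ComplexConjugate

/-!
Fix `n`. Up to unimodular constants, `ψ^{A,B}_{(n,m)}` is `ψ(· + n q₀)` multiplied by the Fourier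
character `e^{iπmx/L}` of period `2L`, so `⟨ψ^{A,B}_{(n,m)}, f⟩` is `2L` times the `m`-th Fourier
coefficient of `conj ψ(· + n q₀) · f`, a function vanishing outside an interval of length `2L`.
Parseval's identity on that interval gives
`∑ₘ |⟨ψ^{A,B}_{(n,m)}, f⟩|² = 2L ∫ |ψ(x + n q₀)|² |f(x)|² dx`,
and summing over `n` with `∑ₙ |ψ(x + n q₀)|² = χ` gives `2Lχ ‖f‖²`.
The same periodization identity bounds `|ψ|²` by `χ`, which makes `conj ψ(· + n q₀) · f`
square integrable.
-/

theorem hasSum_of_tsum_eq_of_ne_zero {ι α : Type*} [AddCommMonoid α] [TopologicalSpace α]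
    {f : ι → α} {c : α}
    (h : ∑' i, f i = c) (hc : c ≠ 0) : HasSum f c := by
  have hf : Summable f := by
    by_contra hf
    exact hc (h ▸ tsum_eq_zero_of_not_summable hf)
  exact h ▸ hf.hasSum

theorem hasSum_integral_of_nonneg_of_ae_hasSum {α ι : Type*} [MeasurableSpace α] {μ : Measure α}
    [Countable ι] {F : ι → α → ℝ} {G : α → ℝ} (hF : ∀ i, AEStronglyMeasurable (F i) μ)
    (hF₀ : ∀ i, 0 ≤ᵐ[μ] F i) (hG : Integrable G μ) (h : ∀ᵐ x ∂μ, HasSum (fun i => F i x) (G x)) :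
    HasSum (fun i => ∫ x, F i x ∂μ) (∫ x, G x ∂μ) :=
  hasSum_integral_of_dominated_convergence F hF
    (fun i => (hF₀ i).mono fun _ hx => (Real.norm_of_nonneg hx).le)
    (h.mono fun _ hx => hx.summable) (hG.congr (h.mono fun _ hx => hx.tsum_eq.symm)) h

theorem MeasureTheory.L2.norm_sq_eq_integral {α 𝕜 : Type*} [MeasurableSpace α] {μ : Measure α}
    [RCLike 𝕜] (f : Lp 𝕜 2 μ) : ‖f‖ ^ 2 = ∫ x, ‖f x‖ ^ 2 ∂μ := by
  apply RCLike.ofReal_injective (K := 𝕜)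
  rw [← integral_ofReal, RCLike.ofReal_pow, ← inner_self_eq_norm_sq_to_K, L2.inner_def]
  simp_rw [inner_self_eq_norm_sq_to_K, RCLike.ofReal_pow]

theorem hasSum_sq_norm_integral_fourier_mul {T : ℝ} [hT : Fact (0 < T)] {a : ℝ} {g : ℝ → ℂ}
    (hg : MemLp g 2 (volume.restrict (Ioc a (a + T))))
    (hsupp : ∀ᵐ x, x ∉ Icc a (a + T) → g x = 0) :
    HasSum (fun m : ℤ => ‖∫ x : ℝ, fourier (-m) (x : AddCircle T) * g x‖ ^ 2)
      (T * ∫ x, ‖g x‖ ^ 2) := by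
  have hab : a < a + T := lt_add_of_pos_right a hT.out
  have hsupp' : ∀ᵐ x, x ∉ Ioc a (a + T) → g x = 0 := by
    filter_upwards [hsupp, Ioc_ae_eq_Icc (μ := volume) (a := a) (b := a + T)] with x hx hx'
    exact fun h => hx fun h' => h (hx'.mpr h')
  have hcoeff (m : ℤ) :
      ∫ x : ℝ, fourier (-m) (x : AddCircle T) * g x = T * fourierCoeffOn hab g m := by
    rw [← fourierCoeff_liftIoc_eq, fourierCoeff_eq_intervalIntegral _ _ a, real_smul,
      ← mul_assoc, ← ofReal_mul, mul_one_div_cancel hT.out.ne', ofReal_one, one_mul,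
      intervalIntegral.integral_of_le hab.le,
      ← setIntegral_eq_integral_of_ae_compl_eq_zero (hsupp'.mono fun x hx hx' => by
        rw [hx hx', mul_zero])]
    exact setIntegral_congr_fun measurableSet_Ioc fun x hx => by
      rw [AddCircle.liftIoc_coe_apply hx, smul_eq_mul]
  have hnorm : ∫ x in a..a + T, ‖g x‖ ^ 2 = ∫ x, ‖g x‖ ^ 2 := by
    rw [intervalIntegral.integral_of_le hab.le, setIntegral_eq_integral_of_ae_compl_eq_zero
      (hsupp'.mono fun x hx hx' => by rw [hx hx', norm_zero, zero_pow two_ne_zero])]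
  have hvalue : T ^ 2 * ((a + T - a)⁻¹ • ∫ x in a..a + T, ‖g x‖ ^ 2) = T * ∫ x, ‖g x‖ ^ 2 := by
    rw [add_sub_cancel_left, hnorm, smul_eq_mul]
    field_simp
  have h := (hasSum_sq_fourierCoeffOn hab hg).mul_left (T ^ 2)
  rw [hvalue] at h
  simpa only [hcoeff, norm_mul, mul_pow, Complex.norm_real, Real.norm_of_nonneg hT.out.le] using h

section Modulation

variable {L : ℝ}

theorem conj_exp_I_mul_eq_fourier (m : ℤ) (x : ℝ) :
    conj (exp (I * ↑(Real.pi * m * x / L))) = fourier (-m) (x : AddCircle (2 * L)) := by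
  rw [← exp_conj, fourier_coe_apply]
  congr 1
  simp only [map_mul, conj_I, conj_ofReal]
  push_cast
  field_simp

theorem inner_modulated_eq_integral_fourier {h f : Lp ℂ 2 volume}
    {u : ℂ} {m : ℤ} {φ : ℝ → ℂ}
    (hh : ⇑h =ᵐ[volume] fun x => u * exp (I * ↑(Real.pi * m * x / L)) * φ x) :
    inner ℂ h f = conj u * ∫ x : ℝ, fourier (-m) (x : AddCircle (2 * L)) * (conj (φ x) * f x) := by
  rw [L2.inner_def, ← integral_const_mul]
  refine integral_congr_ae (hh.mono fun x hx => ?_)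
  dsimp only
  rw [RCLike.inner_apply', hx, ← conj_exp_I_mul_eq_fourier]
  simp only [map_mul]
  ring

theorem hasSum_sq_norm_inner_modulated (hL : 0 < L) {x₀ C : ℝ} {φ : ℝ → ℂ}
    (hφ : AEStronglyMeasurable φ volume) (hφC : ∀ᵐ x, ‖φ x‖ ≤ C)
    (hsupp : ∀ᵐ x, L < |x - x₀| → φ x = 0) {u : ℤ → ℂ} (hu : ∀ m, ‖u m‖ = 1)
    {h : ℤ → Lp ℂ 2 volume}
    (hh : ∀ m : ℤ, ⇑(h m) =ᵐ[volume] fun x => u m * exp (I * ↑(Real.pi * m * x / L)) * φ x)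
    (f : Lp ℂ 2 volume) :
    HasSum (fun m => ‖inner ℂ (h m) f‖ ^ 2) (2 * L * ∫ x, ‖φ x‖ ^ 2 * ‖f x‖ ^ 2) := by
  have : Fact (0 < 2 * L) := ⟨by positivity⟩
  have hg : MemLp (fun x => conj (φ x) * f x) 2 volume :=
    (Lp.memLp f).of_le_mul (c := C)
      ((continuous_conj.comp_aestronglyMeasurable hφ).mul (Lp.aestronglyMeasurable f))
      (hφC.mono fun x hx => by
        rw [norm_mul, RCLike.norm_conj]
        exact mul_le_mul_of_nonneg_right hx (norm_nonneg _))
  have hg_supp : ∀ᵐ x, x ∉ Icc (x₀ - L) (x₀ - L + 2 * L) → conj (φ x) * f x = 0 := by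
    refine hsupp.mono fun x hx hx' => ?_
    rw [hx ?_, map_zero, zero_mul]
    by_contra hle
    obtain ⟨h₁, h₂⟩ := abs_le.mp (not_lt.mp hle)
    exact hx' ⟨by linarith, by linarith⟩
  convert hasSum_sq_norm_integral_fourier_mul (hg.restrict _) hg_supp using 1
  · ext m
    rw [inner_modulated_eq_integral_fourier (hh m), norm_mul, RCLike.norm_conj, hu, one_mul]
  · simp only [norm_mul, RCLike.norm_conj, mul_pow]

end Modulation

theorem frames_heisenberg_tight_general
    (A B L q₀ p₀ χ : ℝ)
    (hL : 0 < L) (hχ : 0 < χ)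
    (ψ : Lp ℂ 2 (volume : Measure ℝ))
    (hsupp : ∀ᵐ x : ℝ ∂volume, L < |x| → ψ x = 0)
    (hχsum : ∀ᵐ x : ℝ ∂volume, ∑' n : ℤ, ‖ψ (x + n * q₀)‖ ^ 2 = χ)
    (ψAB : ℤ → ℤ → Lp ℂ 2 (volume : Measure ℝ))
    (hψAB : ∀ n m : ℤ, ⇑(ψAB n m) =ᵐ[volume] fun x : ℝ =>
      Complex.exp (Complex.I * Complex.ofReal (A * m * n * q₀ * p₀ / 2)) *
      Complex.exp (Complex.I * Complex.ofReal (B * m * p₀)) *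
      Complex.exp (Complex.I * Complex.ofReal (Real.pi * m * x / L)) *
      ψ (x + n * q₀))
    (f : Lp ℂ 2 (volume : Measure ℝ)) :
    ∑' n : ℤ, ∑' m : ℤ, ‖(inner ℂ (ψAB n m) f : ℂ)‖ ^ 2 = 2 * L * χ * ‖f‖ ^ 2 := by
  have hperiod : ∀ᵐ x, HasSum (fun n : ℤ => ‖ψ (x + n * q₀)‖ ^ 2) χ :=
    hχsum.mono fun x hx => hasSum_of_tsum_eq_of_ne_zero hx hχ.ne'
  have hbound : ∀ᵐ x, ‖ψ x‖ ≤ √χ := hperiod.mono fun x hx => by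
    simpa using Real.le_sqrt_of_sq_le (le_hasSum hx 0 fun _ _ => sq_nonneg _)
  have hτ (n : ℤ) := (measurePreserving_add_right volume ((n : ℝ) * q₀)).quasiMeasurePreserving
  have hψτ (n : ℤ) : AEStronglyMeasurable (fun x => ψ (x + n * q₀)) volume :=
    (Lp.aestronglyMeasurable ψ).comp_quasiMeasurePreserving (hτ n)
  have hrow (n : ℤ) : HasSum (fun m => ‖inner ℂ (ψAB n m) f‖ ^ 2)
      (2 * L * ∫ x, ‖ψ (x + n * q₀)‖ ^ 2 * ‖f x‖ ^ 2) := by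
    refine hasSum_sq_norm_inner_modulated hL (x₀ := -(n * q₀)) (hψτ n) ((hτ n).ae hbound)
      (by simpa only [sub_neg_eq_add] using (hτ n).ae hsupp) (fun m => ?_) (hψAB n) f
    rw [norm_mul, norm_exp_I_mul_ofReal, norm_exp_I_mul_ofReal, one_mul]
  have hcol : HasSum (fun n : ℤ => ∫ x, ‖ψ (x + n * q₀)‖ ^ 2 * ‖f x‖ ^ 2)
      (∫ x, χ * ‖f x‖ ^ 2) :=
    hasSum_integral_of_nonneg_of_ae_hasSum
      (fun n => ((hψτ n).norm.pow 2).mul ((Lp.aestronglyMeasurable f).norm.pow 2))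
      (fun n => Eventually.of_forall fun x => by positivity)
      (((Lp.memLp f).integrable_norm_pow two_ne_zero).const_mul χ)
      (hperiod.mono fun x hx => hx.mul_right _)
  rw [tsum_congr fun n => (hrow n).tsum_eq, tsum_mul_left, hcol.tsum_eq, integral_const_mul,
    L2.norm_sq_eq_integral]
  ring

theorem frames_heisenberg_tight
    (A B L q₀ p₀ χ : ℝ)
    (hA : A ≠ 0) (hL : 0 < L) (hq₀ : q₀ ≠ 0) (hχ : 0 < χ)
    (hp₀ : p₀ = Real.pi / (A * L))
    (hq₀p₀ : |q₀ * p₀| < 2 * Real.pi)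
    (ψ : Lp ℂ 2 (volume : Measure ℝ)) (hψ : ψ ≠ 0)
    (hsupp : ∀ᵐ x : ℝ ∂volume, L < |x| → ψ x = 0)
    (hχsum : ∀ᵐ x : ℝ ∂volume, ∑' n : ℤ, ‖ψ (x + n * q₀)‖ ^ 2 = χ)
    (ψAB : ℤ → ℤ → Lp ℂ 2 (volume : Measure ℝ))
    (hψAB : ∀ n m : ℤ, ⇑(ψAB n m) =ᵐ[volume] fun x : ℝ =>
      Complex.exp (Complex.I * Complex.ofReal (A * m * n * q₀ * p₀ / 2)) *
      Complex.exp (Complex.I * Complex.ofReal (B * m * p₀)) *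
      Complex.exp (Complex.I * Complex.ofReal (Real.pi * m * x / L)) *
      ψ (x + n * q₀))
    (f : Lp ℂ 2 (volume : Measure ℝ)) :
    ∑' n : ℤ, ∑' m : ℤ, ‖(inner ℂ (ψAB n m) f : ℂ)‖ ^ 2 = 2 * L * χ * ‖f‖ ^ 2 :=
  frames_heisenberg_tight_general A B L q₀ p₀ χ hL hχ ψ hsupp hχsum ψAB hψAB f
end

section
/- For every f ∈ L²(ℝ), the series ∑_{n∈ℤ} ∑_{m∈ℤ} (1/(2·χ·L))·⟨ψ^{A,B}_{(n,m)}, f⟩·ψ^{A,B}_{(n,m)} converges unconditionally in L²(ℝ) and its sum equals f. -/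
/-!
For fixed `n`, the coefficients `⟨ψ_{n,m}, g⟩`, `m ∈ ℤ`, are up to unimodular factors the Fourier
coefficients, on an interval of length `2L`, of `conj ψ(· + n q₀) · g`, which is supported there.
Parseval gives `∑ₘ |⟨ψ_{n,m}, g⟩|² = 2L ∫ |ψ(x + n q₀)|² |g(x)|² dx`, and summing over `n` with
`∑ₙ |ψ(x + n q₀)|² = χ` shows that the system is a tight frame with bound `K = 2χL`.
For any tight frame, expanding the square gives
`‖K f - ∑_{i ∈ t} ⟨v_i, f⟩ v_i‖² ≤ K (K ‖f‖² - ∑_{i ∈ t} |⟨v_i, f⟩|²)`, which tends to `0` along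
finite sets `t`: this is the unconditional convergence of the reconstruction series.
-/

open MeasureTheory Filter Topology Set

local notation "⟪" x ", " y "⟫" => @inner ℂ _ _ x y

section TightFrame

variable {E ι : Type*} [NormedAddCommGroup E] [InnerProductSpace ℂ E]

theorem norm_sum_smul_sq_le_of_bessel {v : ι → E} {K : ℝ} (hK : 0 ≤ K)
    (hv : ∀ u : E, ∀ t : Finset ι, ∑ i ∈ t, ‖⟪v i, u⟫‖ ^ 2 ≤ K * ‖u‖ ^ 2)
    (c : ι → ℂ) (t : Finset ι) :
    ‖∑ i ∈ t, c i • v i‖ ^ 2 ≤ K * ∑ i ∈ t, ‖c i‖ ^ 2 := by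
  set u := ∑ i ∈ t, c i • v i
  have hu : ‖u‖ ^ 2 ≤ ∑ i ∈ t, ‖c i‖ * ‖⟪v i, u⟫‖ :=
    calc ‖u‖ ^ 2 = RCLike.re ⟪u, u⟫ := norm_sq_eq_re_inner u
      _ = RCLike.re (∑ i ∈ t, (starRingEnd ℂ) (c i) * ⟪v i, u⟫) := by
        simp only [u, sum_inner, inner_smul_left]
      _ ≤ ∑ i ∈ t, ‖c i‖ * ‖⟪v i, u⟫‖ := by
        refine (RCLike.re_le_norm _).trans ((norm_sum_le _ _).trans_eq ?_)
        simp only [norm_mul, RCLike.norm_conj]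
  have hS : 0 ≤ ∑ i ∈ t, ‖c i‖ ^ 2 := by positivity
  have hsq : (‖u‖ ^ 2) ^ 2 ≤ (∑ i ∈ t, ‖c i‖ ^ 2) * (K * ‖u‖ ^ 2) :=
    (pow_le_pow_left₀ (by positivity) hu 2).trans
      ((Finset.sum_mul_sq_le_sq_mul_sq t _ _).trans (mul_le_mul_of_nonneg_left (hv u t) hS))
  nlinarith [mul_nonneg hK hS, sq_nonneg ‖u‖]

theorem inner_sum_inner_smul_self (v : ι → E) (f : E) (t : Finset ι) :
    ⟪f, ∑ i ∈ t, ⟪v i, f⟫ • v i⟫ = ((∑ i ∈ t, ‖⟪v i, f⟫‖ ^ 2 : ℝ) : ℂ) := by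
  rw [inner_sum, Complex.ofReal_sum]
  refine Finset.sum_congr rfl fun i _ => ?_
  rw [inner_smul_right, ← inner_conj_symm f (v i), RCLike.mul_conj]
  norm_cast

theorem hasSum_inner_smul_of_tight_frame {v : ι → E} {K : ℝ} (hK : 0 ≤ K)
    (hv : ∀ f : E, HasSum (fun i => ‖⟪v i, f⟫‖ ^ 2) (K * ‖f‖ ^ 2)) (f : E) :
    HasSum (fun i => ⟪v i, f⟫ • v i) ((K : ℂ) • f) := by
  have hbessel : ∀ u : E, ∀ t : Finset ι, ∑ i ∈ t, ‖⟪v i, u⟫‖ ^ 2 ≤ K * ‖u‖ ^ 2 :=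
    fun u t => sum_le_hasSum t (fun i _ => by positivity) (hv u)
  have hdist : ∀ t : Finset ι, ‖∑ i ∈ t, ⟪v i, f⟫ • v i - (K : ℂ) • f‖ ^ 2 ≤
      K * (K * ‖f‖ ^ 2 - ∑ i ∈ t, ‖⟪v i, f⟫‖ ^ 2) := by
    intro t
    have hcross : RCLike.re ⟪(K : ℂ) • f, ∑ i ∈ t, ⟪v i, f⟫ • v i⟫ =
        K * ∑ i ∈ t, ‖⟪v i, f⟫‖ ^ 2 := by
      rw [inner_smul_left, inner_sum_inner_smul_self, Complex.conj_ofReal, ← Complex.ofReal_mul,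
        RCLike.re_to_complex, Complex.ofReal_re]
    rw [norm_sub_rev, norm_sub_sq (𝕜 := ℂ), hcross, norm_smul, Complex.norm_real, Real.norm_eq_abs]
    nlinarith [norm_sum_smul_sq_le_of_bessel hK hbessel (fun i => ⟪v i, f⟫) t, sq_abs K]
  have hlim := ((hv f).const_sub (K * ‖f‖ ^ 2)).const_mul K
  rw [sub_self, mul_zero] at hlim
  rw [HasSum, tendsto_iff_norm_sub_tendsto_zero]
  refine squeeze_zero (fun t => norm_nonneg _) (fun t => ?_) (by simpa using hlim.sqrt)
  exact Real.le_sqrt_of_sq_le (hdist t)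

end TightFrame

theorem HasSum.of_prod_fiberwise_of_nonneg {β γ : Type*} {f : β × γ → ℝ} {g : β → ℝ} {a : ℝ}
    (hf : 0 ≤ f) (hfib : ∀ b, HasSum (fun c => f (b, c)) (g b)) (hg : HasSum g a) :
    HasSum f a := by
  have hs : Summable f := (summable_prod_of_nonneg hf).2
    ⟨fun b => (hfib b).summable, hg.summable.congr fun b => ((hfib b).tsum_eq).symm⟩
  exact (hs.hasSum.prod_fiberwise hfib).unique hg ▸ hs.hasSum

theorem integral_eq_intervalIntegral_of_ae_notMem_Icc {E : Type*} [NormedAddCommGroup E]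
    [NormedSpace ℝ E] {a b : ℝ} (hab : a ≤ b) {h : ℝ → E}
    (hh : ∀ᵐ x, x ∉ Icc a b → h x = 0) : ∫ x, h x = ∫ x in a..b, h x := by
  rw [intervalIntegral.integral_of_le hab, ← integral_Icc_eq_integral_Ioc]
  exact (setIntegral_eq_integral_of_ae_compl_eq_zero hh).symm

theorem hasSum_norm_sq_integral_fourier_mul {T : ℝ} [hT : Fact (0 < T)] {a : ℝ} {h : ℝ → ℂ}
    (hL2 : MemLp h 2) (hh : ∀ᵐ x, x ∉ Icc a (a + T) → h x = 0) :
    HasSum (fun m : ℤ => ‖∫ x : ℝ, fourier (-m) (x : AddCircle T) * h x‖ ^ 2)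
      (T * ∫ x, ‖h x‖ ^ 2) := by
  have hab : a < a + T := lt_add_of_pos_right a hT.out
  have hcoeff (m : ℤ) : ∫ x : ℝ, fourier (-m) (x : AddCircle T) * h x =
      (T : ℂ) * fourierCoeffOn hab h m := by
    rw [fourierCoeffOn_eq_integral, add_sub_cancel_left,
      integral_eq_intervalIntegral_of_ae_notMem_Icc hab.le
        (hh.mono fun x hx hx' => by simp [hx hx'])]
    simp [hT.out.ne']
  have hnorm : ∫ x, ‖h x‖ ^ 2 = ∫ x in a..a + T, ‖h x‖ ^ 2 :=
    integral_eq_intervalIntegral_of_ae_notMem_Icc hab.le (hh.mono fun x hx hx' => by simp [hx hx'])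
  have key := (hasSum_sq_fourierCoeffOn hab (hL2.restrict _)).mul_left (T ^ 2)
  rw [add_sub_cancel_left, smul_eq_mul, ← hnorm,
    show T ^ 2 * (T⁻¹ * ∫ x, ‖h x‖ ^ 2) = T * ∫ x, ‖h x‖ ^ 2 by field_simp] at key
  simpa only [hcoeff, norm_mul, mul_pow, Complex.norm_real, Real.norm_eq_abs, sq_abs] using key

theorem MeasureTheory.L2.integral_norm_sq_eq_norm_sq {α 𝕜 E : Type*} [MeasurableSpace α]
    {μ : Measure α} [RCLike 𝕜] [NormedAddCommGroup E] [InnerProductSpace 𝕜 E]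
    (g : Lp E 2 μ) : ∫ x, ‖g x‖ ^ 2 ∂μ = ‖g‖ ^ 2 := by
  rw [norm_sq_eq_re_inner (𝕜 := 𝕜), L2.inner_def, ← integral_re (L2.integrable_inner g g)]
  simp only [← norm_sq_eq_re_inner]

theorem MeasureTheory.Lp.stronglyMeasurable_comp_add_const {E : Type*} [NormedAddCommGroup E]
    {p : ENNReal} (f : Lp E p (volume : Measure ℝ)) (y : ℝ) :
    StronglyMeasurable fun x => f (x + y) :=
  (Lp.stronglyMeasurable f).comp_measurable (measurable_add_const y)

theorem fourier_coe_eq_exp (L : ℝ) (m : ℤ) (x : ℝ) :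
    fourier m (x : AddCircle (2 * L)) =
      Complex.exp (Complex.I * Complex.ofReal (Real.pi * m * x / L)) := by
  rw [fourier_coe_apply]
  congr 1
  push_cast
  field_simp

theorem norm_inner_eq_norm_integral_fourier_mul {T : ℝ} {φ : Lp ℂ 2 (volume : Measure ℝ)}
    {c : ℂ} (hc : ‖c‖ = 1) {m : ℤ} {h : ℝ → ℂ}
    (hφ : ⇑φ =ᵐ[volume] fun x => c * fourier m (x : AddCircle T) * h x)
    (g : Lp ℂ 2 (volume : Measure ℝ)) :
    ‖⟪φ, g⟫‖ = ‖∫ x : ℝ, fourier (-m) (x : AddCircle T) * ((starRingEnd ℂ) (h x) * g x)‖ := by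
  have hinteg : (fun x => ⟪φ x, g x⟫) =ᵐ[volume] fun x =>
      (starRingEnd ℂ) c * (fourier (-m) (x : AddCircle T) * ((starRingEnd ℂ) (h x) * g x)) := by
    filter_upwards [hφ] with x hx
    rw [RCLike.inner_apply, hx, fourier_neg]
    simp only [map_mul]
    ring
  rw [L2.inner_def, integral_congr_ae hinteg, integral_const_mul, norm_mul, RCLike.norm_conj, hc,
    one_mul]

section Translates

variable {q₀ χ : ℝ} {ψ : Lp ℂ 2 (volume : Measure ℝ)}

theorem hasSum_norm_sq_translate_mul (hχ : χ ≠ 0)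
    (hχsum : ∀ᵐ x : ℝ, ∑' n : ℤ, ‖ψ (x + n * q₀)‖ ^ 2 = χ) (g : Lp ℂ 2 (volume : Measure ℝ)) :
    ∀ᵐ x : ℝ, HasSum (fun n : ℤ => ‖ψ (x + n * q₀)‖ ^ 2 * ‖g x‖ ^ 2) (χ * ‖g x‖ ^ 2) := by
  filter_upwards [hχsum] with x hx
  have hs : Summable fun n : ℤ => ‖ψ (x + n * q₀)‖ ^ 2 := by
    by_contra hs
    exact hχ (hx ▸ tsum_eq_zero_of_not_summable hs)
  exact hx ▸ hs.hasSum.mul_right _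

theorem hasSum_integral_norm_sq_translate_mul (hχ : χ ≠ 0)
    (hχsum : ∀ᵐ x : ℝ, ∑' n : ℤ, ‖ψ (x + n * q₀)‖ ^ 2 = χ) (g : Lp ℂ 2 (volume : Measure ℝ)) :
    HasSum (fun n : ℤ => ∫ x, ‖ψ (x + n * q₀)‖ ^ 2 * ‖g x‖ ^ 2) (χ * ‖g‖ ^ 2) := by
  have hsum := hasSum_norm_sq_translate_mul hχ hχsum g
  have hmeas (n : ℤ) : AEStronglyMeasurable (fun x => ‖ψ (x + n * q₀)‖ ^ 2 * ‖g x‖ ^ 2) :=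
    (((Lp.stronglyMeasurable_comp_add_const ψ (n * q₀)).norm.pow 2).mul
      ((Lp.stronglyMeasurable g).norm.pow 2)).aestronglyMeasurable
  have hgint : Integrable (fun x => ‖g x‖ ^ 2) := (Lp.memLp g).integrable_norm_pow two_ne_zero
  rw [← L2.integral_norm_sq_eq_norm_sq (𝕜 := ℂ), ← integral_const_mul]
  refine hasSum_integral_of_dominated_convergence (fun n x => ‖ψ (x + n * q₀)‖ ^ 2 * ‖g x‖ ^ 2)
    hmeas (fun n => ae_of_all _ fun x => (Real.norm_of_nonneg (by positivity)).le)
    (hsum.mono fun x hx => hx.summable) ?_ hsum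
  refine (hgint.const_mul χ).congr ?_
  filter_upwards [hsum] with x hx using hx.tsum_eq.symm

theorem memLp_conj_translate_mul (hχ : χ ≠ 0)
    (hχsum : ∀ᵐ x : ℝ, ∑' n : ℤ, ‖ψ (x + n * q₀)‖ ^ 2 = χ) (g : Lp ℂ 2 (volume : Measure ℝ))
    (n : ℤ) : MemLp (fun x => (starRingEnd ℂ) (ψ (x + n * q₀)) * g x) 2 := by
  have hmeas : AEStronglyMeasurable fun x => (starRingEnd ℂ) (ψ (x + n * q₀)) * g x :=
    ((Complex.continuous_conj.comp_stronglyMeasurable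
        (Lp.stronglyMeasurable_comp_add_const ψ _)).mul
      (Lp.stronglyMeasurable g)).aestronglyMeasurable
  have hgint : Integrable (fun x => ‖g x‖ ^ 2) := (Lp.memLp g).integrable_norm_pow two_ne_zero
  refine (memLp_two_iff_integrable_sq_norm hmeas).2
    ((hgint.const_mul χ).mono' (hmeas.norm.pow 2) ?_)
  filter_upwards [hasSum_norm_sq_translate_mul hχ hχsum g] with x hx
  rw [Real.norm_of_nonneg (by positivity), norm_mul, RCLike.norm_conj, mul_pow]
  exact le_hasSum hx n fun _ _ => by positivity

theorem hasSum_norm_sq_inner_gabor {T : ℝ} [Fact (0 < T)] {a : ℝ} (hχ : χ ≠ 0)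
    (hsupp : ∀ᵐ x : ℝ, x ∉ Icc a (a + T) → ψ x = 0)
    (hχsum : ∀ᵐ x : ℝ, ∑' n : ℤ, ‖ψ (x + n * q₀)‖ ^ 2 = χ)
    {φ : ℤ → ℤ → Lp ℂ 2 (volume : Measure ℝ)} {c : ℤ → ℤ → ℂ} (hc : ∀ n m, ‖c n m‖ = 1)
    (hφ : ∀ n m : ℤ, ⇑(φ n m) =ᵐ[volume] fun x =>
      c n m * fourier m (x : AddCircle T) * ψ (x + n * q₀))
    (g : Lp ℂ 2 (volume : Measure ℝ)) :
    HasSum (fun nm : ℤ × ℤ => ‖⟪φ nm.1 nm.2, g⟫‖ ^ 2) (T * χ * ‖g‖ ^ 2) := by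
  have hfiber (n : ℤ) : HasSum (fun m => ‖⟪φ n m, g⟫‖ ^ 2)
      (T * ∫ x, ‖ψ (x + n * q₀)‖ ^ 2 * ‖g x‖ ^ 2) := by
    have hh : ∀ᵐ x, x ∉ Icc (a - n * q₀) (a - n * q₀ + T) →
        (starRingEnd ℂ) (ψ (x + n * q₀)) * g x = 0 := by
      filter_upwards [(measurePreserving_add_right volume (n * q₀)).quasiMeasurePreserving.ae hsupp]
        with x hx hx'
      have hout : x + n * q₀ ∉ Icc a (a + T) := fun hmem =>
        hx' ⟨by linarith [hmem.1], by linarith [hmem.2]⟩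
      rw [hx hout, map_zero, zero_mul]
    convert hasSum_norm_sq_integral_fourier_mul (memLp_conj_translate_mul hχ hχsum g n) hh using 1
    · funext m
      rw [norm_inner_eq_norm_integral_fourier_mul (hc n m) (hφ n m) g]
    · simp only [norm_mul, RCLike.norm_conj, mul_pow]
  rw [mul_assoc]
  exact HasSum.of_prod_fiberwise_of_nonneg (fun _ => by positivity) hfiber
    ((hasSum_integral_norm_sq_translate_mul hχ hχsum g).mul_left T)

end Translates

theorem frames_heisenberg_expansion_general
    (A B L q₀ p₀ χ : ℝ)
    (hL : 0 < L) (hχ : 0 < χ)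
    (ψ : Lp ℂ 2 (volume : Measure ℝ))
    (hsupp : ∀ᵐ x : ℝ ∂volume, L < |x| → ψ x = 0)
    (hχsum : ∀ᵐ x : ℝ ∂volume, ∑' n : ℤ, ‖ψ (x + n * q₀)‖ ^ 2 = χ)
    (ψAB : ℤ → ℤ → Lp ℂ 2 (volume : Measure ℝ))
    (hψAB : ∀ n m : ℤ, ⇑(ψAB n m) =ᵐ[volume] fun x : ℝ =>
      Complex.exp (Complex.I * Complex.ofReal (A * m * n * q₀ * p₀ / 2)) *
      Complex.exp (Complex.I * Complex.ofReal (B * m * p₀)) *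
      Complex.exp (Complex.I * Complex.ofReal (Real.pi * m * x / L)) *
      ψ (x + n * q₀))
    (f : Lp ℂ 2 (volume : Measure ℝ)) :
    HasSum (fun nm : ℤ × ℤ =>
      (Complex.ofReal (1 / (2 * χ * L))) • ((inner ℂ (ψAB nm.1 nm.2) f : ℂ) • ψAB nm.1 nm.2)) f := by
  have : Fact (0 < 2 * L) := ⟨by positivity⟩
  have hsupp' : ∀ᵐ x : ℝ, x ∉ Icc (-L) (-L + 2 * L) → ψ x = 0 := by
    filter_upwards [hsupp] with x hx hx'
    refine hx (lt_abs.2 ?_)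
    by_contra! h
    exact hx' ⟨by linarith [neg_abs_le x], by linarith⟩
  have hψAB' (n m : ℤ) : ⇑(ψAB n m) =ᵐ[volume] fun x : ℝ =>
      Complex.exp (Complex.I * Complex.ofReal (A * m * n * q₀ * p₀ / 2)) *
      Complex.exp (Complex.I * Complex.ofReal (B * m * p₀)) *
      fourier m (x : AddCircle (2 * L)) * ψ (x + n * q₀) := by
    simpa only [fourier_coe_eq_exp] using hψAB n m
  have hframe := hasSum_norm_sq_inner_gabor hχ.ne' hsupp' hχsum (fun n m => by
    rw [norm_mul, Complex.norm_exp_I_mul_ofReal, Complex.norm_exp_I_mul_ofReal, one_mul]) hψAB'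
  have hK : (0 : ℝ) ≤ 2 * L * χ := by positivity
  have hexp := (hasSum_inner_smul_of_tight_frame hK hframe f).const_smul
    (Complex.ofReal (1 / (2 * χ * L)))
  rwa [smul_smul, ← Complex.ofReal_mul, show 1 / (2 * χ * L) * (2 * L * χ) = 1 by field_simp,
    Complex.ofReal_one, one_smul] at hexp

theorem frames_heisenberg_expansion
    (A B L q₀ p₀ χ : ℝ)
    (hA : A ≠ 0) (hL : 0 < L) (hq₀ : q₀ ≠ 0) (hχ : 0 < χ)
    (hp₀ : p₀ = Real.pi / (A * L))
    (hq₀p₀ : |q₀ * p₀| < 2 * Real.pi)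
    (ψ : Lp ℂ 2 (volume : Measure ℝ)) (hψ : ψ ≠ 0)
    (hsupp : ∀ᵐ x : ℝ ∂volume, L < |x| → ψ x = 0)
    (hχsum : ∀ᵐ x : ℝ ∂volume, ∑' n : ℤ, ‖ψ (x + n * q₀)‖ ^ 2 = χ)
    (ψAB : ℤ → ℤ → Lp ℂ 2 (volume : Measure ℝ))
    (hψAB : ∀ n m : ℤ, ⇑(ψAB n m) =ᵐ[volume] fun x : ℝ =>
      Complex.exp (Complex.I * Complex.ofReal (A * m * n * q₀ * p₀ / 2)) *
      Complex.exp (Complex.I * Complex.ofReal (B * m * p₀)) *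
      Complex.exp (Complex.I * Complex.ofReal (Real.pi * m * x / L)) *
      ψ (x + n * q₀))
    (f : Lp ℂ 2 (volume : Measure ℝ)) :
    HasSum (fun nm : ℤ × ℤ =>
      (Complex.ofReal (1 / (2 * χ * L))) • ((inner ℂ (ψAB nm.1 nm.2) f : ℂ) • ψAB nm.1 nm.2)) f :=
  frames_heisenberg_expansion_general A B L q₀ p₀ χ hL hχ ψ hsupp hχsum ψAB hψAB f
end

section
/- For every n, m ∈ ℤ, as ε → 0⁺ the frame vectors ψ^{ε}_{(n,m)} converge to ψ^{A,B}_{(n,m)} in L²(ℝ); that is, lim_{ε→0⁺} ‖ψ^{ε}_{(n,m)} − ψ^{A,B}_{(n,m)}‖_{L²(ℝ)} = 0, and moreover ψ^{ε}_{(n,m)}(x) → ψ^{A,B}_{(n,m)}(x) for every x ∈ ℝ (for the given pointwise representatives). -/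
/-!
The phase of `ψ^ε_{(n,m)}` is `(a₀ + A/ε) γ + (b₀ - A/ε) β e^{-εx}`. Writing `γ = β c` with
`c = εnq₀ / (1 - e^{-εnq₀}) = 1 + εnq₀/2 + o(ε)` and using that `a₀ + b₀ = B` does not depend
on `ε`, the two terms of order `1/ε` cancel and the phase converges to that of `ψ^{A,B}_{(n,m)}`;
the envelope `e^{-ε(x + nq₀)/2}` tends to `1`. This gives pointwise convergence. On the support
of `ψ(· + nq₀)` the envelope is at most `e^{L/2}` for `ε ≤ 1`, so `|ψ(· + nq₀)|` dominates and
dominated convergence in `L²` finishes the proof.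
-/

open MeasureTheory Filter Topology
open scoped ENNReal

namespace Real

theorem tendsto_exp_sub_one_div : Tendsto (fun t => (exp t - 1) / t) (𝓝[≠] 0) (𝓝 1) := by
  have h := (hasDerivAt_exp 0).tendsto_slope_zero
  simpa [div_eq_inv_mul] using h

theorem tendsto_sinh_div : Tendsto (fun t => sinh t / t) (𝓝[≠] 0) (𝓝 1) := by
  have h := (hasDerivAt_sinh 0).tendsto_slope_zero
  simpa [div_eq_inv_mul] using h

theorem tendsto_exp_sub_one_sub_div_sq :
    Tendsto (fun t => (exp t - 1 - t) / t ^ 2) (𝓝[≠] 0) (𝓝 (1 / 2)) := by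
  refine HasDerivAt.lhopital_zero_nhdsNE (f' := fun t => exp t - 1) (g' := fun t => 2 * t)
    (Eventually.of_forall fun t => ((hasDerivAt_exp t).sub_const 1).sub (hasDerivAt_id t))
    (Eventually.of_forall fun t => by simpa using hasDerivAt_pow 2 t)
    (eventually_mem_nhdsWithin.mono fun t ht => mul_ne_zero two_ne_zero ht)
    ?_ ?_ ?_
  · exact tendsto_nhdsWithin_of_tendsto_nhds
      ((by fun_prop : Continuous fun t => exp t - 1 - t).tendsto' 0 0 (by simp))
  · exact tendsto_nhdsWithin_of_tendsto_nhds
      ((continuous_pow 2).tendsto' (0 : ℝ) 0 (by simp))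
  · exact (tendsto_exp_sub_one_div.div_const 2).congr fun t => by ring

theorem tendsto_div_exp_sub_one_sub_one_div :
    Tendsto (fun t => (t / (exp t - 1) - 1) / t) (𝓝[≠] 0) (𝓝 (-(1 / 2))) := by
  have h := (tendsto_exp_sub_one_sub_div_sq.mul (tendsto_exp_sub_one_div.inv₀ one_ne_zero)).neg
  rw [inv_one, mul_one] at h
  refine h.congr' ?_
  filter_upwards [self_mem_nhdsWithin] with t (ht : t ≠ 0)
  have he : exp t - 1 ≠ 0 := sub_ne_zero.2 fun h => ht ((exp_eq_one_iff t).1 h)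
  field_simp
  ring

end Real

open Real

theorem tendsto_mul_const_nhdsNE {c : ℝ} (hc : c ≠ 0) :
    Tendsto (fun ε => ε * c) (𝓝[≠] 0) (𝓝[≠] 0) :=
  tendsto_nhdsWithin_of_tendsto_nhds_of_eventually_within _
    (tendsto_nhdsWithin_of_tendsto_nhds ((continuous_mul_const c).tendsto' 0 0 (zero_mul c)))
    (eventually_mem_nhdsWithin.mono fun _ hε => mul_ne_zero hε hc)

theorem tendsto_div_sinh_mul {L : ℝ} (hL : L ≠ 0) :
    Tendsto (fun ε => ε / sinh (ε * L)) (𝓝[≠] 0) (𝓝 (1 / L)) := by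
  have h := ((tendsto_sinh_div.comp (tendsto_mul_const_nhdsNE hL)).inv₀ one_ne_zero).div_const L
  rw [inv_one] at h
  refine h.congr fun ε => ?_
  simp only [Function.comp_apply, inv_div]
  rw [div_div, mul_div_mul_right _ _ hL]

theorem tendsto_exp_neg_mul_sub_one_div (x : ℝ) :
    Tendsto (fun ε => (exp (-(ε * x)) - 1) / ε) (𝓝[≠] 0) (𝓝 (-x)) := by
  have hd : HasDerivAt (fun ε => exp (-(ε * x))) (-x) 0 := by
    simpa using (((hasDerivAt_id (0 : ℝ)).mul_const x).neg).exp
  simpa [div_eq_inv_mul] using hd.tendsto_slope_zero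

theorem tendsto_mul_div_one_sub_exp_neg_sub_one_div {k : ℝ} (hk : k ≠ 0) :
    Tendsto (fun ε => (ε * k / (1 - exp (-(ε * k))) - 1) / ε) (𝓝[≠] 0) (𝓝 (k / 2)) := by
  have h := (tendsto_div_exp_sub_one_sub_one_div.comp
    (tendsto_mul_const_nhdsNE (neg_ne_zero.2 hk))).mul_const (-k)
  rw [neg_mul_neg, one_div_mul_eq_div] at h
  refine h.congr' ?_
  filter_upwards [self_mem_nhdsWithin] with ε (hε : ε ≠ 0)
  have he : exp (-(ε * k)) - 1 ≠ 0 :=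
    sub_ne_zero.2 fun h => mul_ne_zero hε hk (neg_eq_zero.1 ((exp_eq_one_iff _).1 h))
  have he' : 1 - exp (-(ε * k)) ≠ 0 := fun h => he (by linarith)
  simp only [Function.comp_apply, mul_neg]
  field_simp
  ring

theorem tendsto_of_tendsto_sub_div {l : Filter ℝ} (hl : l ≤ 𝓝[≠] 0) {c : ℝ → ℝ} {a ℓ : ℝ}
    (hc : Tendsto (fun ε => (c ε - a) / ε) l (𝓝 ℓ)) : Tendsto c l (𝓝 a) := by
  have h := ((tendsto_id.mono_right (hl.trans nhdsWithin_le_nhds)).mul hc).const_add a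
  rw [zero_mul, add_zero] at h
  refine h.congr' ?_
  filter_upwards [hl self_mem_nhdsWithin] with ε (hε : ε ≠ 0)
  simp only [id]
  field_simp
  ring

theorem tendsto_contractedPhase {A L a₀ b₀ k μ x : ℝ} (hA : A ≠ 0) (hL : 0 < L)
    (hb : ∀ᶠ ε in 𝓝[>] 0, b₀ - A / ε ≠ 0) {β c : ℝ → ℝ}
    (hβ : ∀ ε, β ε = -exp (-(ε * k)) * μ / ((b₀ - A / ε) * sinh (ε * L)))
    (hc : Tendsto (fun ε => (c ε - 1) / ε) (𝓝[>] 0) (𝓝 (k / 2))) :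
    Tendsto (fun ε => (a₀ + A / ε) * (β ε * c ε) + (b₀ - A / ε) * β ε * exp (-(ε * x)))
      (𝓝[>] 0) (𝓝 (μ / (A * L) * (A * k / 2 + (a₀ + b₀)) + μ * x / L)) := by
  have hpos : ∀ᶠ ε in 𝓝[>] (0 : ℝ), 0 < ε := self_mem_nhdsWithin
  have hexp : Tendsto (fun ε => exp (-(ε * k))) (𝓝[>] 0) (𝓝 1) :=
    tendsto_nhdsWithin_of_tendsto_nhds
      ((by fun_prop : Continuous fun ε => exp (-(ε * k))).tendsto' 0 1 (by simp))
  have hprefactor := (hexp.mul_const μ).neg.mul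
    ((tendsto_div_sinh_mul hL.ne').mono_left (nhdsGT_le_nhdsNE 0))
  have hc_one := tendsto_of_tendsto_sub_div (nhdsGT_le_nhdsNE 0) hc
  have hnum : Tendsto (fun ε => (a₀ + A / ε) * (c ε - 1) + (a₀ + b₀)) (𝓝[>] 0)
      (𝓝 (A * k / 2 + (a₀ + b₀))) := by
    have h := ((hc_one.sub_const 1).const_mul a₀).add (hc.const_mul A)
    rw [sub_self, mul_zero, zero_add, ← mul_div_assoc] at h
    refine (h.add_const _).congr' ?_
    filter_upwards [hpos] with ε hε
    ring
  have hden : Tendsto (fun ε => ε * (b₀ - A / ε)) (𝓝[>] 0) (𝓝 (-A)) := by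
    refine (tendsto_nhdsWithin_of_tendsto_nhds
      ((by fun_prop : Continuous fun ε : ℝ => ε * b₀ - A).tendsto' 0 (-A) (by simp))).congr' ?_
    filter_upwards [hpos] with ε hε
    field_simp
  -- The phase equals `-(e^{-εk} μ) (ε / sinh εL) (num / (ε b) + (e^{-εx} - 1) / ε)`, with
  -- `b = b₀ - A/ε` and `num = (a₀ + A/ε)(c - 1) + a₀ + b₀`; each factor has a finite limit.
  have hlim := hprefactor.mul ((hnum.div hden (neg_ne_zero.2 hA)).add
    ((tendsto_exp_neg_mul_sub_one_div x).mono_left (nhdsGT_le_nhdsNE 0)))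
  have hval : μ / (A * L) * (A * k / 2 + (a₀ + b₀)) + μ * x / L =
      -(1 * μ) * (1 / L) * ((A * k / 2 + (a₀ + b₀)) / -A + -x) := by
    field_simp
    ring
  rw [hval]
  refine hlim.congr' ?_
  filter_upwards [hpos, hb] with ε hε hbε
  have hs : sinh (ε * L) ≠ 0 := (sinh_pos_iff.2 (mul_pos hε hL)).ne'
  have hd : ε * b₀ - A ≠ 0 := by
    simpa [mul_sub, mul_div_cancel₀ _ hε.ne'] using mul_ne_zero hε.ne' hbε
  rw [hβ, Pi.div_apply]
  field_simp
  ring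

theorem MeasureTheory.Lp.tendsto_of_dominated {α E ι : Type*} [MeasurableSpace α] {μ : Measure α}
    [NormedAddCommGroup E] {p : ℝ≥0∞} [Fact (1 ≤ p)] (hp : p ≠ ∞)
    {l : Filter ι} [l.IsCountablyGenerated] {F : ι → Lp E p μ} {f : Lp E p μ}
    {G : ι → α → E} {g : α → E} (bound : α → ℝ) (hbound : MemLp bound p μ)
    (hFG : ∀ᶠ i in l, F i =ᵐ[μ] G i) (hfg : f =ᵐ[μ] g)
    (h_bound : ∀ᶠ i in l, ∀ᵐ x ∂μ, ‖G i x - g x‖ ≤ bound x)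
    (h_lim : ∀ᵐ x ∂μ, Tendsto (fun i => G i x) l (𝓝 (g x))) :
    Tendsto F l (𝓝 f) := by
  have hp0 : p ≠ 0 := (zero_lt_one.trans_le (Fact.out : 1 ≤ p)).ne'
  have hpr : 0 < p.toReal := ENNReal.toReal_pos hp0 hp
  have hsub : ∀ᶠ i in l, ⇑(F i) - ⇑f =ᵐ[μ] G i - g := by
    filter_upwards [hFG] with i hi using hi.sub hfg
  rw [Lp.tendsto_Lp_iff_tendsto_eLpNorm']
  refine Tendsto.congr' (by filter_upwards [hsub] with i hi using (eLpNorm_congr_ae hi).symm) ?_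
  simp only [eLpNorm_eq_lintegral_rpow_enorm_toReal hp0 hp]
  have hint : Tendsto (fun i => ∫⁻ x, ‖(G i - g) x‖ₑ ^ p.toReal ∂μ) l (𝓝 0) := by
    have := tendsto_lintegral_filter_of_dominated_convergence' (μ := μ) (l := l)
      (F := fun i x => ‖(G i - g) x‖ₑ ^ p.toReal)
      (fun x => ‖bound x‖ₑ ^ p.toReal) ?_ ?_
      (lintegral_rpow_enorm_lt_top_of_eLpNorm_lt_top hp0 hp hbound.eLpNorm_lt_top).ne
      (f := fun _ => 0) ?_
    · simpa using this
    · filter_upwards [hsub] with i hi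
      exact (((Lp.aestronglyMeasurable (F i)).sub (Lp.aestronglyMeasurable f)).congr
        hi).enorm.pow_const _
    · filter_upwards [h_bound] with i hi
      filter_upwards [hi] with x hx
      gcongr
      exact enorm_le_iff_norm_le.2 (hx.trans (Real.le_norm_self _))
    · filter_upwards [h_lim] with x hx
      have h0 : Tendsto (fun i => ‖G i x - g x‖ₑ) l (𝓝 0) := by
        simpa using (tendsto_sub_nhds_zero_iff.2 hx).enorm
      simpa [Function.comp_def, ENNReal.zero_rpow_of_pos hpr] using
        ((ENNReal.continuous_rpow_const (y := p.toReal)).tendsto 0).comp h0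
  simpa [Function.comp_def, ENNReal.zero_rpow_of_pos (inv_pos.2 hpr)] using
    ((ENNReal.continuous_rpow_const (y := p.toReal⁻¹)).tendsto 0).comp hint

-- Pointwise representatives of `ψ^{A,B}_{(n,m)}` and of `ψ^ε_{(n,m)}`.
open Complex in
noncomputable def frameVector (A B L q₀ p₀ : ℝ) (ψ : ℝ → ℂ) (n m : ℤ) (x : ℝ) : ℂ :=
  exp (I * ofReal (A * m * n * q₀ * p₀ / 2)) * exp (I * ofReal (B * m * p₀)) *
    exp (I * ofReal (Real.pi * m * x / L)) * ψ (x + n * q₀)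

open Complex in
noncomputable def contractedFrameVector (A q₀ a₀ b₀ : ℝ) (β γ : ℝ → ℤ → ℤ → ℝ) (ψ : ℝ → ℂ) (ε : ℝ)
    (n m : ℤ) (x : ℝ) : ℂ :=
  exp (I * ofReal ((a₀ + A / ε) * γ ε n m)) *
    exp (I * ofReal ((b₀ - A / ε) * β ε n m * Real.exp (-(ε * x)))) *
    ofReal (Real.exp (-(ε * (x + n * q₀) / 2))) * ψ (x + n * q₀)

section FrameVectors

variable {A B L q₀ p₀ a₀ b₀ : ℝ} {β γ : ℝ → ℤ → ℤ → ℝ}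

theorem tendsto_contractedFrameVector_phase (hA : A ≠ 0) (hL : 0 < L) (hq₀ : q₀ ≠ 0)
    (hp₀ : p₀ = π / (A * L)) (hab : a₀ + b₀ = B) (hb : ∀ ε ∈ Set.Ioc (0 : ℝ) 1, b₀ - A / ε ≠ 0)
    (hβ : ∀ (ε : ℝ) (n m : ℤ), β ε n m =
      -exp (-(ε * n * q₀)) * π * m / ((b₀ - A / ε) * sinh (ε * L)))
    (hγ : ∀ (ε : ℝ) (n m : ℤ), n ≠ 0 → γ ε n m =
      β ε n m * (ε * n * q₀) / (1 - exp (-(ε * n * q₀))))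
    (hγ₀ : ∀ (ε : ℝ) (m : ℤ), γ ε 0 m = β ε 0 m) (n m : ℤ) (x : ℝ) :
    Tendsto (fun ε => (a₀ + A / ε) * γ ε n m + (b₀ - A / ε) * β ε n m * exp (-(ε * x)))
      (𝓝[>] 0) (𝓝 (A * m * n * q₀ * p₀ / 2 + B * m * p₀ + π * m * x / L)) := by
  set c : ℝ → ℝ := fun ε => if n = 0 then 1 else ε * (n * q₀) / (1 - exp (-(ε * (n * q₀))))
  have hγc : ∀ ε, γ ε n m = β ε n m * c ε := by
    intro ε
    by_cases hn : n = 0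
    · simp [c, hn, hγ₀]
    · simp only [c, if_neg hn, hγ ε n m hn, mul_assoc ε, mul_div_assoc]
  have hc : Tendsto (fun ε => (c ε - 1) / ε) (𝓝[>] 0) (𝓝 (n * q₀ / 2)) := by
    by_cases hn : n = 0
    · simp [c, hn]
    · simpa only [c, if_neg hn] using (tendsto_mul_div_one_sub_exp_neg_sub_one_div
        (mul_ne_zero (Int.cast_ne_zero.2 hn) hq₀)).mono_left (nhdsGT_le_nhdsNE 0)
  have h := tendsto_contractedPhase (a₀ := a₀) (β := fun ε => β ε n m) (μ := π * m) (x := x) hA hL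
    (by filter_upwards [Ioc_mem_nhdsGT zero_lt_one] using hb)
    (fun ε => by rw [hβ, mul_assoc ε, mul_assoc (-exp _)]) hc
  have hval : π * m / (A * L) * (A * (n * q₀) / 2 + (a₀ + b₀)) + π * m * x / L =
      A * m * n * q₀ * p₀ / 2 + B * m * p₀ + π * m * x / L := by
    rw [hp₀, hab]
    field_simp
  rw [hval] at h
  exact h.congr fun ε => by rw [hγc]

theorem tendsto_contractedFrameVector {ψ : ℝ → ℂ} {n m : ℤ} {x : ℝ}
    (hphase : Tendsto
      (fun ε => (a₀ + A / ε) * γ ε n m + (b₀ - A / ε) * β ε n m * exp (-(ε * x)))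
      (𝓝[>] 0) (𝓝 (A * m * n * q₀ * p₀ / 2 + B * m * p₀ + π * m * x / L))) :
    Tendsto (fun ε => contractedFrameVector A q₀ a₀ b₀ β γ ψ ε n m x) (𝓝[>] 0)
      (𝓝 (frameVector A B L q₀ p₀ ψ n m x)) := by
  have hcis := ((by fun_prop : Continuous fun θ : ℝ => Complex.exp (Complex.I * θ)).tendsto _).comp
    hphase
  have henvelope : Tendsto (fun ε : ℝ => (exp (-(ε * (x + n * q₀) / 2)) : ℂ)) (𝓝[>] 0) (𝓝 1) :=
    tendsto_nhdsWithin_of_tendsto_nhds ((by fun_prop : Continuous fun ε : ℝ =>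
      (exp (-(ε * (x + n * q₀) / 2)) : ℂ)).tendsto' 0 1 (by simp))
  simp only [Function.comp_def, Complex.ofReal_add, mul_add, Complex.exp_add] at hcis
  have h := (hcis.mul henvelope).mul_const (ψ (x + n * q₀))
  rw [mul_one] at h
  exact h

theorem norm_contractedFrameVector_sub_frameVector_le {ψ : ℝ → ℂ} {ε x : ℝ}
    (hε : ε ∈ Set.Ioc (0 : ℝ) 1) (n m : ℤ) (hx : L < |x + n * q₀| → ψ (x + n * q₀) = 0) :
    ‖contractedFrameVector A q₀ a₀ b₀ β γ ψ ε n m x - frameVector A B L q₀ p₀ ψ n m x‖ ≤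
      (exp (L / 2) + 1) * ‖ψ (x + n * q₀)‖ := by
  refine (norm_sub_le _ _).trans ?_
  simp only [contractedFrameVector, frameVector, norm_mul, Complex.norm_exp_I_mul_ofReal,
    Complex.norm_real, Real.norm_eq_abs, abs_exp, one_mul]
  by_cases hψ : ψ (x + n * q₀) = 0
  · simp [hψ]
  · have hxL : |x + n * q₀| ≤ L := not_lt.1 (mt hx hψ)
    have henvelope : exp (-(ε * (x + n * q₀) / 2)) ≤ exp (L / 2) := by
      obtain ⟨hε0, hε1⟩ := hε
      have hL0 : 0 ≤ L := (abs_nonneg _).trans hxL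
      have := (abs_le.1 hxL).1
      gcongr
      nlinarith [mul_nonneg hε0.le (by linarith : 0 ≤ x + n * q₀ + L),
        mul_nonneg (sub_nonneg.2 hε1) hL0]
    nlinarith [norm_nonneg (ψ (x + n * q₀))]

end FrameVectors

theorem contraction_of_frame_vectors_general
    (A B L q₀ p₀ : ℝ)
    (hA : A ≠ 0) (hL : 0 < L) (hq₀ : q₀ ≠ 0)
    (hp₀ : p₀ = Real.pi / (A * L))
    (ψ : Lp ℂ 2 (volume : Measure ℝ))
    (hsupp : ∀ᵐ x : ℝ ∂volume, L < |x| → ψ x = 0)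
    (ψAB : ℤ → ℤ → Lp ℂ 2 (volume : Measure ℝ))
    (hψAB : ∀ n m : ℤ, ⇑(ψAB n m) =ᵐ[volume] fun x : ℝ =>
      Complex.exp (Complex.I * Complex.ofReal (A * m * n * q₀ * p₀ / 2)) *
      Complex.exp (Complex.I * Complex.ofReal (B * m * p₀)) *
      Complex.exp (Complex.I * Complex.ofReal (Real.pi * m * x / L)) *
      ψ (x + n * q₀))
    (a₀ b₀ : ℝ) (hab : a₀ + b₀ = B)
    (hb : ∀ ε ∈ Set.Ioc (0:ℝ) 1, b₀ - A / ε ≠ 0)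
    (β γ : ℝ → ℤ → ℤ → ℝ)
    (hβ : ∀ (ε : ℝ) (n m : ℤ), β ε n m =
      -Real.exp (-(ε * n * q₀)) * Real.pi * m / ((b₀ - A / ε) * Real.sinh (ε * L)))
    (hγ : ∀ (ε : ℝ) (n m : ℤ), n ≠ 0 → γ ε n m =
      β ε n m * (ε * n * q₀) / (1 - Real.exp (-(ε * n * q₀))))
    (hγ₀ : ∀ (ε : ℝ) (m : ℤ), γ ε 0 m = β ε 0 m)
    (ψe : ℝ → ℤ → ℤ → Lp ℂ 2 (volume : Measure ℝ))
    (hψe : ∀ ε ∈ Set.Ioc (0:ℝ) 1, ∀ n m : ℤ, ⇑(ψe ε n m) =ᵐ[volume] fun x : ℝ =>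
      Complex.exp (Complex.I * Complex.ofReal ((a₀ + A / ε) * γ ε n m)) *
      Complex.exp (Complex.I * Complex.ofReal ((b₀ - A / ε) * β ε n m * Real.exp (-(ε * x)))) *
      Complex.ofReal (Real.exp (-(ε * (x + n * q₀) / 2))) *
      ψ (x + n * q₀))
    (n m : ℤ) :
    Filter.Tendsto (fun ε : ℝ => ‖ψe ε n m - ψAB n m‖) (𝓝[>] (0:ℝ)) (𝓝 0) ∧
    ∀ x : ℝ, Filter.Tendsto (fun ε : ℝ =>
        Complex.exp (Complex.I * Complex.ofReal ((a₀ + A / ε) * γ ε n m)) *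
        Complex.exp (Complex.I * Complex.ofReal ((b₀ - A / ε) * β ε n m * Real.exp (-(ε * x)))) *
        Complex.ofReal (Real.exp (-(ε * (x + n * q₀) / 2))) *
        ψ (x + n * q₀))
      (𝓝[>] (0:ℝ))
      (𝓝 (Complex.exp (Complex.I * Complex.ofReal (A * m * n * q₀ * p₀ / 2)) *
        Complex.exp (Complex.I * Complex.ofReal (B * m * p₀)) *
        Complex.exp (Complex.I * Complex.ofReal (Real.pi * m * x / L)) *
        ψ (x + n * q₀))) := by
  have hpointwise (x : ℝ) := tendsto_contractedFrameVector (ψ := ψ)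
    (tendsto_contractedFrameVector_phase hA hL hq₀ hp₀ hab hb hβ hγ hγ₀ n m x)
  refine ⟨tendsto_iff_norm_sub_tendsto_zero.1 ?_, hpointwise⟩
  have hshift : MeasurePreserving (· + n * q₀) (volume : Measure ℝ) volume :=
    measurePreserving_add_right _ _
  refine Lp.tendsto_of_dominated ENNReal.ofNat_ne_top
    (G := fun ε => contractedFrameVector A q₀ a₀ b₀ β γ ψ ε n m)
    (fun x => (exp (L / 2) + 1) * ‖ψ (x + n * q₀)‖)
    (((Lp.memLp ψ).comp_measurePreserving hshift).norm.const_mul _)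
    ?_ (hψAB n m) ?_ (ae_of_all _ hpointwise)
  · filter_upwards [Ioc_mem_nhdsGT zero_lt_one] with ε hε using hψe ε hε n m
  · filter_upwards [Ioc_mem_nhdsGT zero_lt_one] with ε hε
    filter_upwards [hshift.quasiMeasurePreserving.ae hsupp] with x hx
    exact norm_contractedFrameVector_sub_frameVector_le hε n m hx

theorem contraction_of_frame_vectors
    (A B L q₀ p₀ χ : ℝ)
    (hA : A ≠ 0) (hL : 0 < L) (hq₀ : q₀ ≠ 0) (hχ : 0 < χ)
    (hp₀ : p₀ = Real.pi / (A * L))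
    (hq₀p₀ : |q₀ * p₀| < 2 * Real.pi)
    (ψ : Lp ℂ 2 (volume : Measure ℝ)) (hψ : ψ ≠ 0)
    (hsupp : ∀ᵐ x : ℝ ∂volume, L < |x| → ψ x = 0)
    (hχsum : ∀ᵐ x : ℝ ∂volume, ∑' n : ℤ, ‖ψ (x + n * q₀)‖ ^ 2 = χ)
    (ψAB : ℤ → ℤ → Lp ℂ 2 (volume : Measure ℝ))
    (hψAB : ∀ n m : ℤ, ⇑(ψAB n m) =ᵐ[volume] fun x : ℝ =>
      Complex.exp (Complex.I * Complex.ofReal (A * m * n * q₀ * p₀ / 2)) *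
      Complex.exp (Complex.I * Complex.ofReal (B * m * p₀)) *
      Complex.exp (Complex.I * Complex.ofReal (Real.pi * m * x / L)) *
      ψ (x + n * q₀))
    (a₀ b₀ : ℝ) (hab : a₀ + b₀ = B)
    (hb : ∀ ε ∈ Set.Ioc (0:ℝ) 1, b₀ - A / ε ≠ 0)
    (β γ : ℝ → ℤ → ℤ → ℝ)
    (hβ : ∀ (ε : ℝ) (n m : ℤ), β ε n m =
      -Real.exp (-(ε * n * q₀)) * Real.pi * m / ((b₀ - A / ε) * Real.sinh (ε * L)))
    (hγ : ∀ (ε : ℝ) (n m : ℤ), n ≠ 0 → γ ε n m =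
      β ε n m * (ε * n * q₀) / (1 - Real.exp (-(ε * n * q₀))))
    (hγ₀ : ∀ (ε : ℝ) (m : ℤ), γ ε 0 m = β ε 0 m)
    (ψe : ℝ → ℤ → ℤ → Lp ℂ 2 (volume : Measure ℝ))
    (hψe : ∀ ε ∈ Set.Ioc (0:ℝ) 1, ∀ n m : ℤ, ⇑(ψe ε n m) =ᵐ[volume] fun x : ℝ =>
      Complex.exp (Complex.I * Complex.ofReal ((a₀ + A / ε) * γ ε n m)) *
      Complex.exp (Complex.I * Complex.ofReal ((b₀ - A / ε) * β ε n m * Real.exp (-(ε * x)))) *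
      Complex.ofReal (Real.exp (-(ε * (x + n * q₀) / 2))) *
      ψ (x + n * q₀))
    (n m : ℤ) :
    Filter.Tendsto (fun ε : ℝ => ‖ψe ε n m - ψAB n m‖) (𝓝[>] (0:ℝ)) (𝓝 0) ∧
    ∀ x : ℝ, Filter.Tendsto (fun ε : ℝ =>
        Complex.exp (Complex.I * Complex.ofReal ((a₀ + A / ε) * γ ε n m)) *
        Complex.exp (Complex.I * Complex.ofReal ((b₀ - A / ε) * β ε n m * Real.exp (-(ε * x)))) *
        Complex.ofReal (Real.exp (-(ε * (x + n * q₀) / 2))) *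
        ψ (x + n * q₀))
      (𝓝[>] (0:ℝ))
      (𝓝 (Complex.exp (Complex.I * Complex.ofReal (A * m * n * q₀ * p₀ / 2)) *
        Complex.exp (Complex.I * Complex.ofReal (B * m * p₀)) *
        Complex.exp (Complex.I * Complex.ofReal (Real.pi * m * x / L)) *
        ψ (x + n * q₀))) :=
  contraction_of_frame_vectors_general A B L q₀ p₀ hA hL hq₀ hp₀ ψ hsupp ψAB hψAB a₀ b₀ hab hb β γ
    hβ hγ hγ₀ ψe hψe n m
end

section
/- For every f ∈ L²(ℝ) and every n, m ∈ ℤ, the frame coefficients converge: lim_{ε→0⁺} ⟨ψ^{ε}_{(n,m)}, f⟩ = ⟨ψ^{A,B}_{(n,m)}, f⟩. -/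
/-!
Dominated convergence: on the support of `ψ (· + n q₀)` the damping factor
`e^{-ε(x + n q₀)/2}` is at most `e^{L/2}` for `ε ≤ 1`, so it suffices that the phases converge.
With `b(ε) = b₀ - A/ε` and `G(u) = u / (1 - e^{-u})` one has `γ = β G(ε n q₀)` and
`a(ε) γ + b(ε) β e^{-εx} = B β G(ε n q₀) + b(ε) β (e^{-εx} - G(ε n q₀))`.
As `ε → 0`, `β → π m / (A L) = m p₀` and `b(ε) β ~ -π m / (ε L)`, while
`(e^{-εx} - G(ε n q₀)) / ε → -x - n q₀ / 2` because `G'(0) = 1/2`; the three terms of the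
limiting phase `B m p₀ + π m x / L + A m n q₀ p₀ / 2` come out.
-/

open MeasureTheory Filter Topology

namespace Real

lemma tendsto_one_sub_exp_neg_div :
    Tendsto (fun u : ℝ => (1 - exp (-u)) / u) (𝓝[≠] 0) (𝓝 1) := by
  have h : HasDerivAt (fun u : ℝ => 1 - exp (-u)) 1 0 := by
    simpa using ((hasDerivAt_neg' (0 : ℝ)).exp).const_sub 1
  simpa [div_eq_inv_mul] using h.tendsto_slope_zero

lemma tendsto_sub_one_add_exp_neg_div_sq :
    Tendsto (fun u : ℝ => (u - 1 + exp (-u)) / u ^ 2) (𝓝[≠] 0) (𝓝 (1 / 2)) := by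
  refine HasDerivAt.lhopital_zero_nhdsNE (f' := fun u => 1 - exp (-u)) (g' := fun u => 2 * u)
    ?_ ?_ ?_ ?_ ?_ ?_
  · refine .of_forall fun u => ?_
    exact (((hasDerivAt_id' u).sub_const 1).add (hasDerivAt_neg' u).exp).congr_deriv (by ring)
  · exact .of_forall fun u => by simpa using hasDerivAt_pow 2 u
  · filter_upwards [self_mem_nhdsWithin] with u hu
    simpa using hu
  · exact tendsto_nhdsWithin_of_tendsto_nhds (by simpa using
      (show Continuous fun u : ℝ => u - 1 + exp (-u) by fun_prop).tendsto 0)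
  · exact tendsto_nhdsWithin_of_tendsto_nhds (by simpa using
      (show Continuous fun u : ℝ => u ^ 2 by fun_prop).tendsto 0)
  · simpa [div_mul_eq_div_div_swap] using tendsto_one_sub_exp_neg_div.div_const 2

lemma tendsto_div_sinh_mul {L : ℝ} (hL : L ≠ 0) :
    Tendsto (fun ε : ℝ => ε / sinh (ε * L)) (𝓝[≠] 0) (𝓝 L⁻¹) := by
  have h : HasDerivAt (fun ε : ℝ => sinh (ε * L)) L 0 := by
    simpa using (hasDerivAt_mul_const (x := (0 : ℝ)) L).sinh
  simpa [div_eq_inv_mul] using h.tendsto_slope_zero.inv₀ hL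

end Real

/-- `u / (1 - e^{-u}) = ∑ bernoulli' n * u ^ n / n!`, extended continuously by `1` at `0`,
so that `γ = β * bernoulliGenFun (ε * n * q₀)` holds also for `n = 0`. -/
noncomputable def bernoulliGenFun (u : ℝ) : ℝ :=
  if u = 0 then 1 else u / (1 - Real.exp (-u))

@[simp]
lemma bernoulliGenFun_zero : bernoulliGenFun 0 = 1 := if_pos rfl

lemma bernoulliGenFun_of_ne_zero {u : ℝ} (hu : u ≠ 0) :
    bernoulliGenFun u = u / (1 - Real.exp (-u)) := if_neg hu

lemma hasDerivAt_bernoulliGenFun_zero : HasDerivAt bernoulliGenFun (1 / 2) 0 := by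
  rw [hasDerivAt_iff_tendsto_slope_zero]
  have h := Real.tendsto_sub_one_add_exp_neg_div_sq.mul
    (Real.tendsto_one_sub_exp_neg_div.inv₀ one_ne_zero)
  rw [inv_one, mul_one] at h
  refine h.congr' ?_
  filter_upwards [self_mem_nhdsWithin] with u (hu : u ≠ 0)
  have hd : 1 - Real.exp (-u) ≠ 0 := by
    rwa [sub_ne_zero, ne_comm, Ne, Real.exp_eq_one_iff, neg_eq_zero]
  rw [zero_add, bernoulliGenFun_zero, bernoulliGenFun_of_ne_zero hu, smul_eq_mul]
  field_simp
  ring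

/-- `β_{mn}(ε)`, with `k = π m` and `s = n q₀`. -/
noncomputable def contractionBeta (A b₀ L k s ε : ℝ) : ℝ :=
  -Real.exp (-(ε * s)) * k / ((b₀ - A / ε) * Real.sinh (ε * L))

section Phase

variable (A b₀ k s : ℝ) {L : ℝ}

lemma tendsto_neg_exp_mul_nhdsNE :
    Tendsto (fun ε : ℝ => -Real.exp (-(ε * s)) * k) (𝓝[≠] 0) (𝓝 (-k)) :=
  tendsto_nhdsWithin_of_tendsto_nhds (by simpa using
    (show Continuous fun ε : ℝ => -Real.exp (-(ε * s)) * k by fun_prop).tendsto 0)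

lemma tendsto_mul_sub_nhdsNE :
    Tendsto (fun ε : ℝ => ε * b₀ - A) (𝓝[≠] 0) (𝓝 (-A)) :=
  tendsto_nhdsWithin_of_tendsto_nhds (by simpa using
    (show Continuous fun ε : ℝ => ε * b₀ - A by fun_prop).tendsto 0)

lemma tendsto_contractionBeta (hA : A ≠ 0) (hL : L ≠ 0) :
    Tendsto (contractionBeta A b₀ L k s) (𝓝[≠] 0) (𝓝 (k / (A * L))) := by
  have h := ((tendsto_neg_exp_mul_nhdsNE k s).mul (Real.tendsto_div_sinh_mul hL)).mul
    ((tendsto_mul_sub_nhdsNE A b₀).inv₀ (neg_ne_zero.2 hA))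
  rw [show -k * L⁻¹ * (-A)⁻¹ = k / (A * L) by field_simp] at h
  refine h.congr' ?_
  filter_upwards [self_mem_nhdsWithin] with ε (hε : ε ≠ 0)
  rw [contractionBeta, show b₀ - A / ε = (ε * b₀ - A) / ε by field_simp]
  field_simp

lemma tendsto_sub_div_mul_contractionBeta_mul_sub (hA : A ≠ 0) (hL : L ≠ 0) (x : ℝ) :
    Tendsto (fun ε : ℝ => (b₀ - A / ε) * contractionBeta A b₀ L k s ε *
        (Real.exp (-(ε * x)) - bernoulliGenFun (ε * s))) (𝓝[≠] 0)
      (𝓝 (k * (x + s / 2) / L)) := by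
  have hexp : HasDerivAt (fun ε : ℝ => Real.exp (-(ε * x))) (-x) 0 := by
    simpa using (hasDerivAt_mul_const (x := (0 : ℝ)) x).neg.exp
  have hG : HasDerivAt (fun ε : ℝ => bernoulliGenFun (ε * s)) (1 / 2 * s) 0 :=
    HasDerivAt.comp_of_eq 0 hasDerivAt_bernoulliGenFun_zero (hasDerivAt_mul_const s)
      (zero_mul s).symm
  -- `b(ε) β(ε) = -e^{-εs} k / sinh (ε L)`, and the last factor is a difference quotient at `0`
  have h := ((tendsto_neg_exp_mul_nhdsNE k s).mul (Real.tendsto_div_sinh_mul hL)).mul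
    (hexp.sub hG).tendsto_slope_zero
  rw [show -k * L⁻¹ * (-x - 1 / 2 * s) = k * (x + s / 2) / L by field_simp; ring] at h
  refine h.congr' ?_
  filter_upwards [self_mem_nhdsWithin,
    (tendsto_mul_sub_nhdsNE A b₀).eventually_ne (neg_ne_zero.2 hA)] with ε (hε : ε ≠ 0) hc
  have hsinh : Real.sinh (ε * L) ≠ 0 := Real.sinh_ne_zero.2 (mul_ne_zero hε hL)
  simp only [contractionBeta, Pi.sub_apply, zero_add, zero_mul, neg_zero, Real.exp_zero,
    bernoulliGenFun_zero, sub_self, sub_zero, smul_eq_mul]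
  field_simp

theorem tendsto_contraction_phase (hA : A ≠ 0) (hL : L ≠ 0) (a₀ x : ℝ) :
    Tendsto (fun ε : ℝ =>
        (a₀ + A / ε) * (contractionBeta A b₀ L k s ε * bernoulliGenFun (ε * s)) +
          (b₀ - A / ε) * contractionBeta A b₀ L k s ε * Real.exp (-(ε * x))) (𝓝[≠] 0)
      (𝓝 ((a₀ + b₀) * (k / (A * L)) + k * (x + s / 2) / L)) := by
  have hG : Tendsto (fun ε : ℝ => bernoulliGenFun (ε * s)) (𝓝[≠] 0) (𝓝 1) := by
    have hc : ContinuousAt (fun ε : ℝ => bernoulliGenFun (ε * s)) 0 :=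
      hasDerivAt_bernoulliGenFun_zero.continuousAt.comp_of_eq (by fun_prop) (zero_mul s)
    simpa using hc.tendsto.mono_left nhdsWithin_le_nhds
  have h := (((tendsto_contractionBeta A b₀ k s hA hL).mul hG).const_mul (a₀ + b₀)).add
    (tendsto_sub_div_mul_contractionBeta_mul_sub A b₀ k s hA hL x)
  rw [mul_one] at h
  refine h.congr fun ε => ?_
  ring

end Phase

namespace MeasureTheory.L2

variable {α ι 𝕜 E : Type*} [MeasurableSpace α] {μ : Measure α} [RCLike 𝕜]
  [NormedAddCommGroup E] [InnerProductSpace 𝕜 E] {l : Filter ι} [l.IsCountablyGenerated]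

theorem tendsto_inner_of_dominated_convergence {u : ι → Lp E 2 μ} {v : Lp E 2 μ}
    {F : ι → α → E} {G : α → E} {g : α → ℝ} (hu : ∀ᶠ i in l, u i =ᵐ[μ] F i) (hv : v =ᵐ[μ] G)
    (hg : MemLp g 2 μ) (hbound : ∀ᶠ i in l, ∀ᵐ x ∂μ, ‖F i x‖ ≤ g x)
    (hlim : ∀ᵐ x ∂μ, Tendsto (F · x) l (𝓝 (G x))) (f : Lp E 2 μ) :
    Tendsto (fun i => inner 𝕜 (u i) f) l (𝓝 (inner 𝕜 v f)) := by
  have hint : Integrable (fun x => g x * ‖f x‖) μ := hg.integrable_mul (Lp.memLp f).norm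
  have hF := tendsto_integral_filter_of_dominated_convergence (μ := μ) (l := l)
    (F := fun i x => inner 𝕜 (F i x) (f x)) (f := fun x => inner 𝕜 (G x) (f x)) _
    ?_ ?_ hint ?_
  · rw [L2.inner_def, integral_congr_ae (hv.mono fun x hx => by rw [hx])]
    refine hF.congr' ?_
    filter_upwards [hu] with i hi
    rw [L2.inner_def]
    exact integral_congr_ae (hi.mono fun x hx => by simp only [hx])
  · filter_upwards [hu] with i hi
    exact ((Lp.aestronglyMeasurable (u i)).congr hi).inner (Lp.aestronglyMeasurable f)
  · filter_upwards [hbound] with i hi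
    filter_upwards [hi] with x hx
    exact (norm_inner_le_norm _ _).trans (mul_le_mul_of_nonneg_right hx (norm_nonneg _))
  · filter_upwards [hlim] with x hx
    exact hx.inner tendsto_const_nhds

end MeasureTheory.L2

lemma tendsto_cexp_mul_cexp_mul_exp_mul {l : Filter ℝ} (hl : l ≤ 𝓝 0) {θ₁ θ₂ : ℝ → ℝ}
    {a b c : ℝ} (hθ : Tendsto (fun ε => θ₁ ε + θ₂ ε) l (𝓝 (a + b + c))) (y : ℝ) (z : ℂ) :
    Tendsto (fun ε : ℝ => Complex.exp (Complex.I * θ₁ ε) * Complex.exp (Complex.I * θ₂ ε) *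
        Complex.ofReal (Real.exp (-(ε * y / 2))) * z) l
      (𝓝 (Complex.exp (Complex.I * a) * Complex.exp (Complex.I * b) *
        Complex.exp (Complex.I * c) * z)) := by
  have hamp : Tendsto (fun ε : ℝ => Real.exp (-(ε * y / 2))) (𝓝 0) (𝓝 1) := by
    simpa using (show Continuous fun ε : ℝ => Real.exp (-(ε * y / 2)) by fun_prop).tendsto 0
  have h := (((hθ.ofReal.const_mul Complex.I).cexp).mul (hamp.mono_left hl).ofReal).mul_const z
  simpa only [Complex.ofReal_add, mul_add Complex.I, Complex.exp_add, Complex.ofReal_one,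
    mul_one] using h

lemma exp_neg_mul_div_two_mul_norm_le {φ : ℝ → ℂ} {L ε y : ℝ} (hε : ε ∈ Set.Icc (0 : ℝ) 1)
    (hφ : L < |y| → φ y = 0) :
    Real.exp (-(ε * y / 2)) * ‖φ y‖ ≤ Real.exp (L / 2) * ‖φ y‖ := by
  by_cases hy : L < |y|
  · simp [hφ hy]
  · refine mul_le_mul_of_nonneg_right (Real.exp_le_exp.2 ?_) (norm_nonneg _)
    have : -y ≤ L := (neg_le_abs y).trans (not_lt.1 hy)
    nlinarith [hε.1, hε.2, abs_nonneg y]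

theorem contraction_of_frame_coefficients_general
    (A B L q₀ p₀ : ℝ)
    (hA : A ≠ 0) (hL : 0 < L) (hq₀ : q₀ ≠ 0)
    (hp₀ : p₀ = Real.pi / (A * L))
    (ψ : Lp ℂ 2 (volume : Measure ℝ))
    (hsupp : ∀ᵐ x : ℝ ∂volume, L < |x| → ψ x = 0)
    (ψAB : ℤ → ℤ → Lp ℂ 2 (volume : Measure ℝ))
    (hψAB : ∀ n m : ℤ, ⇑(ψAB n m) =ᵐ[volume] fun x : ℝ =>
      Complex.exp (Complex.I * Complex.ofReal (A * m * n * q₀ * p₀ / 2)) *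
      Complex.exp (Complex.I * Complex.ofReal (B * m * p₀)) *
      Complex.exp (Complex.I * Complex.ofReal (Real.pi * m * x / L)) *
      ψ (x + n * q₀))
    (a₀ b₀ : ℝ) (hab : a₀ + b₀ = B)
    (β γ : ℝ → ℤ → ℤ → ℝ)
    (hβ : ∀ (ε : ℝ) (n m : ℤ), β ε n m =
      -Real.exp (-(ε * n * q₀)) * Real.pi * m / ((b₀ - A / ε) * Real.sinh (ε * L)))
    (hγ : ∀ (ε : ℝ) (n m : ℤ), n ≠ 0 → γ ε n m =
      β ε n m * (ε * n * q₀) / (1 - Real.exp (-(ε * n * q₀))))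
    (hγ₀ : ∀ (ε : ℝ) (m : ℤ), γ ε 0 m = β ε 0 m)
    (ψe : ℝ → ℤ → ℤ → Lp ℂ 2 (volume : Measure ℝ))
    (hψe : ∀ ε ∈ Set.Ioc (0:ℝ) 1, ∀ n m : ℤ, ⇑(ψe ε n m) =ᵐ[volume] fun x : ℝ =>
      Complex.exp (Complex.I * Complex.ofReal ((a₀ + A / ε) * γ ε n m)) *
      Complex.exp (Complex.I * Complex.ofReal ((b₀ - A / ε) * β ε n m * Real.exp (-(ε * x)))) *
      Complex.ofReal (Real.exp (-(ε * (x + n * q₀) / 2))) *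
      ψ (x + n * q₀))
    (f : Lp ℂ 2 (volume : Measure ℝ)) (n m : ℤ) :
    Filter.Tendsto (fun ε : ℝ => (inner ℂ (ψe ε n m) f : ℂ)) (𝓝[>] (0:ℝ))
      (𝓝 (inner ℂ (ψAB n m) f : ℂ)) := by
  set s : ℝ := n * q₀ with hs
  have hIoc : ∀ᶠ ε in 𝓝[>] (0 : ℝ), ε ∈ Set.Ioc (0 : ℝ) 1 :=
    Ioc_mem_nhdsGT_of_mem ⟨le_rfl, zero_lt_one⟩
  have hγβ {ε : ℝ} (hε : ε ≠ 0) : γ ε n m = β ε n m * bernoulliGenFun (ε * s) := by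
    rcases eq_or_ne n 0 with rfl | hn
    · simp [hs, hγ₀]
    · rw [hγ ε n m hn, bernoulliGenFun_of_ne_zero (by positivity), hs, mul_assoc ε, mul_div_assoc]
  have hphase (x : ℝ) : Tendsto (fun ε : ℝ => (a₀ + A / ε) * γ ε n m +
      (b₀ - A / ε) * β ε n m * Real.exp (-(ε * x))) (𝓝[>] 0)
      (𝓝 (A * m * n * q₀ * p₀ / 2 + B * m * p₀ + Real.pi * m * x / L)) := by
    convert ((tendsto_contraction_phase A b₀ (Real.pi * m) s hA hL.ne' a₀ x).mono_left
      (nhdsGT_le_nhdsNE 0)).congr' ?_ using 2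
    · rw [← hab, hp₀, hs]
      field_simp
      ring
    · filter_upwards [self_mem_nhdsWithin] with ε (hε : 0 < ε)
      rw [hγβ hε.ne', hβ, contractionBeta, hs]
      ring_nf
  refine L2.tendsto_inner_of_dominated_convergence (hIoc.mono fun ε hε => hψe ε hε n m)
    (hψAB n m) (g := fun x => Real.exp (L / 2) * ‖ψ (x + s)‖) ?_ ?_
    (.of_forall fun x => tendsto_cexp_mul_cexp_mul_exp_mul nhdsWithin_le_nhds (hphase x) _ _) f
  · exact ((Lp.memLp ψ).comp_measurePreserving
      (measurePreserving_add_right volume s)).norm.const_mul _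
  · filter_upwards [hIoc] with ε hε
    filter_upwards [(measurePreserving_add_right volume s).quasiMeasurePreserving.ae hsupp]
      with x hx
    simp only [norm_mul, Complex.norm_exp_I_mul_ofReal, Complex.norm_real, Real.norm_eq_abs,
      Real.abs_exp, one_mul]
    exact exp_neg_mul_div_two_mul_norm_le (Set.Ioc_subset_Icc_self hε) hx

theorem contraction_of_frame_coefficients
    (A B L q₀ p₀ χ : ℝ)
    (hA : A ≠ 0) (hL : 0 < L) (hq₀ : q₀ ≠ 0) (hχ : 0 < χ)
    (hp₀ : p₀ = Real.pi / (A * L))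
    (hq₀p₀ : |q₀ * p₀| < 2 * Real.pi)
    (ψ : Lp ℂ 2 (volume : Measure ℝ)) (hψ : ψ ≠ 0)
    (hsupp : ∀ᵐ x : ℝ ∂volume, L < |x| → ψ x = 0)
    (hχsum : ∀ᵐ x : ℝ ∂volume, ∑' n : ℤ, ‖ψ (x + n * q₀)‖ ^ 2 = χ)
    (ψAB : ℤ → ℤ → Lp ℂ 2 (volume : Measure ℝ))
    (hψAB : ∀ n m : ℤ, ⇑(ψAB n m) =ᵐ[volume] fun x : ℝ =>
      Complex.exp (Complex.I * Complex.ofReal (A * m * n * q₀ * p₀ / 2)) *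
      Complex.exp (Complex.I * Complex.ofReal (B * m * p₀)) *
      Complex.exp (Complex.I * Complex.ofReal (Real.pi * m * x / L)) *
      ψ (x + n * q₀))
    (a₀ b₀ : ℝ) (hab : a₀ + b₀ = B)
    (hb : ∀ ε ∈ Set.Ioc (0:ℝ) 1, b₀ - A / ε ≠ 0)
    (β γ : ℝ → ℤ → ℤ → ℝ)
    (hβ : ∀ (ε : ℝ) (n m : ℤ), β ε n m =
      -Real.exp (-(ε * n * q₀)) * Real.pi * m / ((b₀ - A / ε) * Real.sinh (ε * L)))
    (hγ : ∀ (ε : ℝ) (n m : ℤ), n ≠ 0 → γ ε n m =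
      β ε n m * (ε * n * q₀) / (1 - Real.exp (-(ε * n * q₀))))
    (hγ₀ : ∀ (ε : ℝ) (m : ℤ), γ ε 0 m = β ε 0 m)
    (ψe : ℝ → ℤ → ℤ → Lp ℂ 2 (volume : Measure ℝ))
    (hψe : ∀ ε ∈ Set.Ioc (0:ℝ) 1, ∀ n m : ℤ, ⇑(ψe ε n m) =ᵐ[volume] fun x : ℝ =>
      Complex.exp (Complex.I * Complex.ofReal ((a₀ + A / ε) * γ ε n m)) *
      Complex.exp (Complex.I * Complex.ofReal ((b₀ - A / ε) * β ε n m * Real.exp (-(ε * x)))) *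
      Complex.ofReal (Real.exp (-(ε * (x + n * q₀) / 2))) *
      ψ (x + n * q₀))
    (f : Lp ℂ 2 (volume : Measure ℝ)) (n m : ℤ) :
    Filter.Tendsto (fun ε : ℝ => (inner ℂ (ψe ε n m) f : ℂ)) (𝓝[>] (0:ℝ))
      (𝓝 (inner ℂ (ψAB n m) f : ℂ)) :=
  contraction_of_frame_coefficients_general A B L q₀ p₀ hA hL hq₀ hp₀ ψ hsupp ψAB hψAB a₀ b₀ hab β γ
    hβ hγ hγ₀ ψe hψe f n m
end

section
/- (Norm contraction of representations.) For every f ∈ L²(ℝ) and every (c, v₁, v₂) ∈ ℝ³, the functions x ↦ exp(i·a(ε)·(v₂ + ε·(v₁ − c·v₂/2)))·exp(i·b(ε)·v₂·D_ε(c)·exp(−ε·x))·f(c + x) converge, as ε → 0⁺, in the norm of L²(ℝ) to the function x ↦ exp(i·(B·v₂ + A·(v₁ + v₂·x)))·f(c + x). -/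
/-!
With `E = dslope exp 0`, i.e. `E t = (exp t - 1) / t`, one has `D_ε(c) = E(-εc)`. Putting
`ψ(ε) = E(-εc) exp(-εx)`, the phase of the contracted operator at `x` equals
`a₀v₂ + A(v₁ - cv₂/2) + ε a₀(v₁ - cv₂/2) + b₀v₂ ψ(ε) + Av₂ (1 - ψ(ε))/ε`:
the terms of order `1/ε` cancel, and `E'(0) = 1/2` gives `(1 - ψ(ε))/ε → c/2 + x`.
So the phases converge pointwise to `Bv₂ + A(v₁ + v₂x)`; both multipliers being unimodular,
dominated convergence with dominating function `2|f(c + ·)|` gives convergence in `L²`.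
-/

open MeasureTheory Filter Topology

/-- `D_ε(c) = (exp(−εc) − 1)/(−εc)` for `c ≠ 0`, `D_ε(0) = 1`. -/
noncomputable def Dfun (ε c : ℝ) : ℝ :=
  if c = 0 then 1 else (Real.exp (-(ε * c)) - 1) / (-(ε * c))

open scoped ENNReal

section DominatedConvergence

variable {ι α E : Type*} [MeasurableSpace α] {μ : Measure α} {l : Filter ι}
  [l.IsCountablyGenerated] {p : ℝ≥0∞}

theorem tendsto_eLpNorm_zero_of_dominated [NormedAddCommGroup E] (hp : p ≠ ∞)
    {F : ι → α → E} {g : α → ℝ} (hg : MemLp g p μ)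
    (hF : ∀ᶠ i in l, AEStronglyMeasurable (F i) μ)
    (h_bound : ∀ᶠ i in l, ∀ᵐ x ∂μ, ‖F i x‖ ≤ g x)
    (h_lim : ∀ᵐ x ∂μ, Tendsto (fun i => F i x) l (𝓝 0)) :
    Tendsto (fun i => eLpNorm (F i) p μ) l (𝓝 0) := by
  rcases eq_or_ne p 0 with rfl | hp0
  · simpa using tendsto_const_nhds
  have hr : 0 < p.toReal := ENNReal.toReal_pos hp0 hp
  have h_int : Tendsto (fun i => ∫⁻ x, ‖F i x‖ₑ ^ p.toReal ∂μ) l (𝓝 0) := by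
    rw [← lintegral_zero]
    refine tendsto_lintegral_filter_of_dominated_convergence' (fun x => ‖g x‖ₑ ^ p.toReal) ?_ ?_
      (lintegral_rpow_enorm_lt_top_of_eLpNorm_lt_top hp0 hp hg.eLpNorm_lt_top).ne ?_
    · filter_upwards [hF] with i hi using hi.enorm.pow_const _
    · filter_upwards [h_bound] with i hi
      filter_upwards [hi] with x hx
      rw [← ofReal_norm, ← ofReal_norm]
      gcongr
      exact hx.trans (Real.le_norm_self _)
    · filter_upwards [h_lim] with x hx
      have := (((ENNReal.continuous_rpow_const (y := p.toReal)).comp continuous_enorm).tendsto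
        (0 : E)).comp hx
      rwa [Function.comp_def, Function.comp_apply, enorm_zero, ENNReal.zero_rpow_of_pos hr] at this
  simp only [eLpNorm_eq_lintegral_rpow_enorm_toReal hp0 hp]
  have := ((ENNReal.continuous_rpow_const (y := 1 / p.toReal)).tendsto 0).comp h_int
  rwa [ENNReal.zero_rpow_of_pos (by positivity)] at this

theorem tendsto_eLpNorm_mul_sub_mul {R : Type*} [NormedRing R] (hp : p ≠ ∞)
    {u : ι → α → R} {u₀ f : α → R} (hf : MemLp f p μ)
    (hu : ∀ᶠ i in l, AEStronglyMeasurable (u i) μ) (hu₀ : AEStronglyMeasurable u₀ μ)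
    (hu_le : ∀ᶠ i in l, ∀ᵐ x ∂μ, ‖u i x‖ ≤ 1) (hu₀_le : ∀ᵐ x ∂μ, ‖u₀ x‖ ≤ 1)
    (h_lim : ∀ᵐ x ∂μ, Tendsto (fun i => u i x) l (𝓝 (u₀ x))) :
    Tendsto (fun i => eLpNorm (fun x => u i x * f x - u₀ x * f x) p μ) l (𝓝 0) := by
  refine tendsto_eLpNorm_zero_of_dominated hp (g := fun x => 2 * ‖f x‖) (hf.norm.const_mul 2)
    ?_ ?_ ?_
  · filter_upwards [hu] with i hi using (hi.mul hf.1).sub (hu₀.mul hf.1)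
  · filter_upwards [hu_le] with i hi
    filter_upwards [hi, hu₀_le] with x hx hx₀
    rw [← sub_mul]
    calc ‖(u i x - u₀ x) * f x‖ ≤ (‖u i x‖ + ‖u₀ x‖) * ‖f x‖ :=
          (norm_mul_le _ _).trans (by gcongr; exact norm_sub_le _ _)
      _ ≤ 2 * ‖f x‖ := by gcongr; linarith
  · filter_upwards [h_lim] with x hx
    simpa [← sub_mul] using (hx.sub_const (u₀ x)).mul_const (f x)

end DominatedConvergence

theorem hasDerivAt_dslope_exp_zero : HasDerivAt (dslope Real.exp 0) (1 / 2) 0 := by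
  rw [hasDerivAt_iff_tendsto_slope]
  -- `Real.exp_bound` with `n = 3`: `|exp t - (1 + t + t^2/2)| ≤ (2/9) |t|^3` for `|t| ≤ 1`
  have h_bound : ∀ᶠ t in 𝓝[≠] (0 : ℝ), ‖slope (dslope Real.exp 0) 0 t - 1 / 2‖ ≤ 2 / 9 * |t| := by
    filter_upwards [self_mem_nhdsWithin,
      nhdsWithin_le_nhds (Metric.closedBall_mem_nhds (0 : ℝ) one_pos)] with t (ht : t ≠ 0) ht1
    rw [Metric.mem_closedBall, Real.dist_0_eq_abs] at ht1
    have h_taylor := Real.exp_bound ht1 (n := 3) (by norm_num)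
    norm_num [Finset.sum_range_succ, Nat.factorial] at h_taylor
    have h_eq : slope (dslope Real.exp 0) 0 t - 1 / 2 =
        (Real.exp t - (1 + t + t ^ 2 / 2)) / t ^ 2 := by
      rw [slope_def_field, dslope_of_ne _ ht, dslope_same, slope_def_field, Real.deriv_exp,
        Real.exp_zero]
      field_simp
      ring
    rw [h_eq, Real.norm_eq_abs, abs_div, abs_of_nonneg (sq_nonneg t), div_le_iff₀ (by positivity)]
    calc _ ≤ |t| ^ 3 * (4 / 18) := by convert h_taylor using 2; ring
      _ = 2 / 9 * |t| * t ^ 2 := by rw [← sq_abs t]; ring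
  have h_zero : Tendsto (fun t : ℝ => 2 / 9 * |t|) (𝓝[≠] 0) (𝓝 0) := by
    simpa using ((continuous_abs.const_mul (2 / 9 : ℝ)).tendsto 0).mono_left nhdsWithin_le_nhds
  have h_lim := (squeeze_zero_norm' h_bound h_zero).add_const (1 / 2)
  simp only [sub_add_cancel, zero_add] at h_lim
  exact h_lim

theorem Dfun_eq_dslope {ε : ℝ} (hε : ε ≠ 0) (c : ℝ) :
    Dfun ε c = dslope Real.exp 0 (-(ε * c)) := by
  rcases eq_or_ne c 0 with rfl | hc
  · simp [Dfun]
  · rw [Dfun, if_neg hc, dslope_of_ne _ (by simp [hε, hc]), slope_def_field, Real.exp_zero,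
      sub_zero]

theorem hasDerivAt_dslope_exp_mul_exp (c x : ℝ) :
    HasDerivAt (fun ε => dslope Real.exp 0 (-(ε * c)) * Real.exp (-(ε * x))) (-(c / 2) - x) 0 := by
  have h_lin : ∀ y : ℝ, HasDerivAt (fun ε : ℝ => -(ε * y)) (-y) 0 := fun y =>
    (hasDerivAt_mul_const y).neg
  have h₁ : HasDerivAt (fun ε => dslope Real.exp 0 (-(ε * c))) (1 / 2 * -c) 0 := by
    have h : HasDerivAt (dslope Real.exp 0) (1 / 2) (-(0 * c)) := by
      rw [zero_mul, neg_zero]; exact hasDerivAt_dslope_exp_zero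
    exact h.comp 0 (h_lin c)
  refine (h₁.mul (h_lin x).exp).congr_deriv ?_
  simp only [one_div, mul_neg, zero_mul, neg_zero, Real.exp_zero, mul_one, dslope_same,
    Real.deriv_exp, one_mul]
  ring

theorem tendsto_phase_contraction (A B a₀ b₀ c v₁ v₂ x : ℝ) (hab : a₀ + b₀ = B) :
    Tendsto (fun ε : ℝ => (a₀ + A / ε) * (v₂ + ε * (v₁ - c * v₂ / 2)) +
        (b₀ - A / ε) * v₂ * Dfun ε c * Real.exp (-(ε * x)))
      (𝓝[>] 0) (𝓝 (B * v₂ + A * (v₁ + v₂ * x))) := by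
  set ψ := fun ε => dslope Real.exp 0 (-(ε * c)) * Real.exp (-(ε * x))
  have hψ := hasDerivAt_dslope_exp_mul_exp c x
  have hψ₀ : ψ 0 = 1 := by simp [ψ, dslope_same]
  have h_eq : ∀ ε > (0 : ℝ), (a₀ + A / ε) * (v₂ + ε * (v₁ - c * v₂ / 2)) +
      (b₀ - A / ε) * v₂ * Dfun ε c * Real.exp (-(ε * x)) =
      a₀ * v₂ + A * (v₁ - c * v₂ / 2) + a₀ * (v₁ - c * v₂ / 2) * ε + b₀ * v₂ * ψ ε
        - A * v₂ * slope ψ 0 ε := fun ε hε => by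
    have hε₀ := hε.ne'
    rw [slope_def_field, hψ₀, Dfun_eq_dslope hε₀, mul_assoc _ (dslope _ _ _)]
    simp only [ψ]
    field_simp
    ring
  have h_slope : Tendsto (slope ψ 0) (𝓝[>] 0) (𝓝 (-(c / 2) - x)) :=
    (hasDerivAt_iff_tendsto_slope.mp hψ).mono_left (nhdsWithin_mono _ fun _ h => ne_of_gt h)
  have h_val : Tendsto ψ (𝓝[>] 0) (𝓝 1) :=
    hψ₀ ▸ hψ.continuousAt.tendsto.mono_left nhdsWithin_le_nhds
  have h_id : Tendsto (fun ε : ℝ => ε) (𝓝[>] 0) (𝓝 0) :=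
    tendsto_nhdsWithin_of_tendsto_nhds tendsto_id
  have h_lim := (((h_id.const_mul (a₀ * (v₁ - c * v₂ / 2))).const_add
    (a₀ * v₂ + A * (v₁ - c * v₂ / 2))).add (h_val.const_mul (b₀ * v₂))).sub
    (h_slope.const_mul (A * v₂))
  rw [show B * v₂ + A * (v₁ + v₂ * x) = a₀ * v₂ + A * (v₁ - c * v₂ / 2) +
      a₀ * (v₁ - c * v₂ / 2) * 0 + b₀ * v₂ * 1 - A * v₂ * (-(c / 2) - x) by rw [← hab]; ring]
  refine h_lim.congr' ?_
  filter_upwards [self_mem_nhdsWithin] with ε hε using (h_eq ε hε).symm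

theorem norm_contraction_of_representations_general
    (A B a₀ b₀ : ℝ) (hab : a₀ + b₀ = B)
    (f : Lp ℂ 2 (volume : Measure ℝ)) (c v₁ v₂ : ℝ) :
    Filter.Tendsto (fun ε : ℝ =>
        eLpNorm (fun x : ℝ =>
          Complex.exp (Complex.I * Complex.ofReal ((a₀ + A / ε) * (v₂ + ε * (v₁ - c * v₂ / 2)))) *
          Complex.exp (Complex.I * Complex.ofReal ((b₀ - A / ε) * v₂ * Dfun ε c * Real.exp (-(ε * x)))) *
          f (c + x) -
          Complex.exp (Complex.I * Complex.ofReal (B * v₂ + A * (v₁ + v₂ * x))) * f (c + x))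
        2 volume)
      (𝓝[>] (0:ℝ)) (𝓝 0) := by
  refine tendsto_eLpNorm_mul_sub_mul ENNReal.ofNat_ne_top
    ((Lp.memLp f).comp_measurePreserving (measurePreserving_add_left volume c))
    (.of_forall fun ε => (by fun_prop : Continuous _).aestronglyMeasurable)
    (by fun_prop : Continuous _).aestronglyMeasurable
    (.of_forall fun ε => ae_of_all _ fun x => by
      simp only [norm_mul, Complex.norm_exp_I_mul_ofReal, mul_one, le_refl])
    (ae_of_all _ fun x => (Complex.norm_exp_I_mul_ofReal _).le) (ae_of_all _ fun x => ?_)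
  simp only [← Complex.exp_add, ← mul_add, ← Complex.ofReal_add]
  exact ((Complex.continuous_exp.comp (continuous_const.mul Complex.continuous_ofReal)).tendsto
    _).comp (tendsto_phase_contraction A B a₀ b₀ c v₁ v₂ x hab)

theorem norm_contraction_of_representations
    (A B a₀ b₀ : ℝ) (hA : A ≠ 0) (hab : a₀ + b₀ = B)
    (f : Lp ℂ 2 (volume : Measure ℝ)) (c v₁ v₂ : ℝ) :
    Filter.Tendsto (fun ε : ℝ =>
        eLpNorm (fun x : ℝ =>
          Complex.exp (Complex.I * Complex.ofReal ((a₀ + A / ε) * (v₂ + ε * (v₁ - c * v₂ / 2)))) *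
          Complex.exp (Complex.I * Complex.ofReal ((b₀ - A / ε) * v₂ * Dfun ε c * Real.exp (-(ε * x)))) *
          f (c + x) -
          Complex.exp (Complex.I * Complex.ofReal (B * v₂ + A * (v₁ + v₂ * x))) * f (c + x))
        2 volume)
      (𝓝[>] (0:ℝ)) (𝓝 0) :=
  norm_contraction_of_representations_general A B a₀ b₀ hab f c v₁ v₂
end
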